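/- arXiv:1905.08053 — 9 statements merged into one kernel-verified Lean document; each statement's English description precedes it below -/
import Mathlib

section
/- Suppose d = (d_1 ≥ … ≥ d_m), g = (g_1 ≥ … ≥ g_{m+s}) and a = (a_1 ≥ … ≥ a_s) are partitions with g ≺″ (d,a). Let u be an integer such that h_j < u ≤ h_{j+1} for some j ∈ {0,…,s}, where h_0 = 0 and h_{s+1} = m+s+1. Then Σ_{i=u}^{m+s} g_i ≥ Σ_{i=u−j}^{m} d_i + Σ_{i=j+1}^{s} a_i. -/
open Finset
open scoped Classical

noncomputable section

namespace GenMaj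

/-- Extended entries of a finite (1-indexed) sequence `x` of length `w`:
`+∞` for indices `≤ 0` and `-∞` for indices `> w`. -/
def ext (w : ℤ) (x : ℤ → ℤ) (i : ℤ) : EReal :=
  if i ≤ 0 then ⊤ else if i ≤ w then ((x i : ℝ) : EReal) else ⊥

/-- `h_j = min { i | d_{i-j+1} < g_i }` (with the above conventions), where `d` has
length `m` and `g` has length `m + s`. -/
def hIdx (m s : ℤ) (d g : ℤ → ℤ) (j : ℤ) : ℤ :=
  sInf {i : ℤ | ext m d (i - j + 1) < ext (m + s) g i}

/-- Weak generalized majorization `g ≺″ (d, a)`. -/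
def WeakMaj (m s : ℤ) (d a g : ℤ → ℤ) : Prop :=
  (∀ i ∈ Finset.Icc (1 : ℤ) m, g (i + s) ≤ d i) ∧
  (∀ j ∈ Finset.Icc (1 : ℤ) s,
      (∑ i ∈ Finset.Icc (hIdx m s d g j - j + 1) m, d i) +
          (∑ i ∈ Finset.Icc (j + 1) s, a i) ≤
        ∑ i ∈ Finset.Icc (hIdx m s d g j + 1) (m + s), g i) ∧
  ((∑ i ∈ Finset.Icc (1 : ℤ) m, d i) + (∑ i ∈ Finset.Icc (1 : ℤ) s, a i) ≤
      ∑ i ∈ Finset.Icc (1 : ℤ) (m + s), g i)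

/-- Generalized majorization `g ≺′ (d, a)`. -/
def GenMajRel (m s : ℤ) (d a g : ℤ → ℤ) : Prop :=
  (∀ i ∈ Finset.Icc (1 : ℤ) m, g (i + s) ≤ d i) ∧
  (∀ j ∈ Finset.Icc (1 : ℤ) s,
      (∑ i ∈ Finset.Icc (1 : ℤ) (hIdx m s d g j), g i) -
          (∑ i ∈ Finset.Icc (1 : ℤ) (hIdx m s d g j - j), d i) ≤
        ∑ i ∈ Finset.Icc (1 : ℤ) j, a i) ∧
  (∑ i ∈ Finset.Icc (1 : ℤ) (m + s), g i =
      (∑ i ∈ Finset.Icc (1 : ℤ) m, d i) + (∑ i ∈ Finset.Icc (1 : ℤ) s, a i))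

/-- The quantity `q_j = s - #{i ∈ S : c_i < d_j} + #{i > j : i ∉ Δ} + 1`. -/
def qd (m s : ℤ) (c d : ℤ → ℤ) (S Δ : Finset ℤ) (j : ℤ) : ℤ :=
  s - ((S.filter (fun i => c i < d j)).card : ℤ) +
      (((Finset.Icc (j + 1) m).filter (fun i => i ∉ Δ)).card : ℤ) + 1

/-- The quantity `#{i : a_i > c_l} - s + #{i ∈ S : i > l} - #{i ∉ Δ : d_i < c_l} + 1`. -/
def Na (m s : ℤ) (a c d : ℤ → ℤ) (S Δ : Finset ℤ) (l : ℤ) : ℤ :=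
  (((Finset.Icc (1 : ℤ) s).filter (fun i => c l < a i)).card : ℤ) - s +
      ((S.filter (fun i => l < i)).card : ℤ) -
      (((Finset.Icc (1 : ℤ) m).filter (fun i => i ∉ Δ ∧ d i < c l)).card : ℤ) + 1

/-- The membership criterion for the set `Δ` at the index `j`:  `j ∈ Δ` unless
`q_j ≤ s` and either (a) for the minimal `l ∈ S` with `d_j > c_l` one has
`#{i : a_i > c_l} ≥ s - #{i ∈ S : i > l} + #{i ∉ Δ : d_i < c_l}` and `d_j` is among the
smallest `Na l` entries of `e` (the nonincreasing union of `d` and `a`, where `a`-entries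
are placed before equal `d`-entries) that are bigger than `c_l`, or (b)
`Σ_{i ∈ S, c_i < d_j} c_i ≥ Σ_{i ∉ Δ, i > j} d_i + d_j + Σ_{i=q_j+1}^{s} a_i`.
The dual criterion for `S` is obtained by swapping the roles of the data. -/
def DeltaCond (m s : ℤ) (a c d : ℤ → ℤ) (S Δ : Finset ℤ) (j : ℤ) : Prop :=
  ¬ (qd m s c d S Δ j ≤ s ∧
      ((∃ l ∈ S, c l < d j ∧ (∀ l' ∈ S, c l' < d j → l ≤ l') ∧
          1 ≤ Na m s a c d S Δ l ∧
          (((Finset.Icc (j + 1) m).filter (fun i => c l < d i)).card : ℤ) +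
              (((Finset.Icc (1 : ℤ) s).filter (fun i => c l < a i ∧ a i < d j)).card : ℤ) + 1 ≤
            Na m s a c d S Δ l) ∨
        ((∑ i ∈ (Finset.Icc (j + 1) m).filter (fun i => i ∉ Δ), d i) + d j +
            (∑ i ∈ Finset.Icc (qd m s c d S Δ j + 1) s, a i) ≤
          ∑ i ∈ S.filter (fun i => c i < d j), c i)))

/-- `t_j = s - (h' - j) + #{i ∉ Δ : d_i < c^j}` for `1 ≤ j ≤ h'`, with
`t_0 = m + s - h - h'` and `t_{h'+1} = s + 1`. -/
def tC (m s h h' : ℤ) (d : ℤ → ℤ) (Δ : Finset ℤ) (C : ℤ → ℤ) (j : ℤ) : ℤ :=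
  if j = 0 then m + s - h - h'
  else if j = h' + 1 then s + 1
  else s - (h' - j) + (((Finset.Icc (1 : ℤ) m).filter (fun i => i ∉ Δ ∧ d i < C j)).card : ℤ)

/-- `z_j = #{i : d_i > c^j}` for `1 ≤ j ≤ h'`, with `z_0 = 0` and `z_{h'+1} = m`. -/
def zC (m h' : ℤ) (d : ℤ → ℤ) (C : ℤ → ℤ) (j : ℤ) : ℤ :=
  if j = 0 then 0
  else if j = h' + 1 then m
  else (((Finset.Icc (1 : ℤ) m).filter (fun i => C j < d i)).card : ℤ)

/-- `m_j = #{i : a_i > c^j}` for `1 ≤ j ≤ h'`, with `m_0 = 0`. -/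
def mC (s : ℤ) (a : ℤ → ℤ) (C : ℤ → ℤ) (j : ℤ) : ℤ :=
  if j = 0 then 0 else (((Finset.Icc (1 : ℤ) s).filter (fun i => C j < a i)).card : ℤ)

/-- `w_y = #{i ∉ Δ : c^y > d_i > c^{y+1}}` for `0 ≤ y ≤ h'` (with `c^0 = +∞`,
`c^{h'+1} = -∞`). -/
def wC (m h' : ℤ) (d : ℤ → ℤ) (Δ : Finset ℤ) (C : ℤ → ℤ) (y : ℤ) : ℤ :=
  (((Finset.Icc (1 : ℤ) m).filter (fun i =>
      i ∉ Δ ∧ (1 ≤ y → d i < C y) ∧ (y + 1 ≤ h' → C (y + 1) < d i))).card : ℤ)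

end GenMaj

open GenMaj

section Aux

open GenMaj

variable {m s : ℤ} {d a g : ℤ → ℤ}

/-- The set defining `hIdx`. -/
private def Sset (m s : ℤ) (d g : ℤ → ℤ) (j : ℤ) : Set ℤ :=
  {i : ℤ | ext m d (i - j + 1) < ext (m + s) g i}

private lemma Sset_subset (j : ℤ) : Sset m s d g j ⊆ Set.Ici j := by
  intro i hi
  by_contra hij
  simp only [Set.mem_Ici, not_le] at hij
  have h0 : i - j + 1 ≤ 0 := by omega
  have : ext m d (i - j + 1) = ⊤ := by simp [GenMaj.ext, h0]
  rw [Sset, Set.mem_setOf_eq, this] at hi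
  exact (not_top_lt hi)

private lemma Sset_bdd (j : ℤ) : BddBelow (Sset m s d g j) :=
  ⟨j, fun _ hi => Sset_subset j hi⟩

private lemma mem_Sset (hm : 0 ≤ m) (j : ℤ) (hj1 : 1 ≤ j) (hjs : j ≤ s) :
    m + j ∈ Sset m s d g j := by
  have h1 : ext m d (m + j - j + 1) = ⊥ := by
    have : m + j - j + 1 = m + 1 := by ring
    rw [this]; simp [GenMaj.ext]; omega
  have h2 : ext (m + s) g (m + j) = ((g (m + j) : ℝ) : EReal) := by
    simp only [GenMaj.ext, if_neg (by omega : ¬ m + j ≤ 0), if_pos (by omega : m + j ≤ m + s)]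
  rw [Sset, Set.mem_setOf_eq, h1, h2]
  exact EReal.bot_lt_coe _

private lemma hIdx_le (hm : 0 ≤ m) (j : ℤ) (hj1 : 1 ≤ j) (hjs : j ≤ s) :
    hIdx m s d g j ≤ m + j :=
  csInf_le (Sset_bdd j) (mem_Sset hm j hj1 hjs)

private lemma le_hIdx (hm : 0 ≤ m) (j : ℤ) (hj1 : 1 ≤ j) (hjs : j ≤ s) :
    j ≤ hIdx m s d g j :=
  le_csInf ⟨m + j, mem_Sset hm j hj1 hjs⟩ (fun i hi => Sset_subset j hi)

/-- Minimality of `hIdx`: below it, the defining condition fails. -/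
private lemma notMem_of_lt_hIdx {j i : ℤ} (hi : i < hIdx m s d g j) :
    ext (m + s) g i ≤ ext m d (i - j + 1) := by
  by_contra h
  push_neg at h
  have : hIdx m s d g j ≤ i := csInf_le (Sset_bdd j) h
  omega

/-- From the extended comparison, extract the integer one. -/
private lemma extract {j i : ℤ} (hj : 0 ≤ j) (hji : j + 1 ≤ i) (hi : i ≤ m + s)
    (h : ext (m + s) g i ≤ ext m d (i - j)) : i - j ≤ m ∧ g i ≤ d (i - j) := by
  have hg : ext (m + s) g i = ((g i : ℝ) : EReal) := by
    rw [GenMaj.ext, if_neg (by omega : ¬ i ≤ 0), if_pos hi]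
  rw [hg] at h
  have h1 : ¬ i - j ≤ 0 := by omega
  by_cases h2 : i - j ≤ m
  · refine ⟨h2, ?_⟩
    rw [GenMaj.ext, if_neg h1, if_pos h2] at h
    exact_mod_cast EReal.coe_le_coe_iff.mp h
  · exfalso
    rw [GenMaj.ext, if_neg h1, if_neg h2] at h
    exact (EReal.bot_lt_coe _).not_ge h

private lemma sum_shift (p q j : ℤ) (f : ℤ → ℤ) :
    ∑ i ∈ Finset.Ioc (p - j) (q - j), f i = ∑ i ∈ Finset.Ioc p q, f (i - j) := by
  have : Finset.Ioc (p - j) (q - j) = (Finset.Ioc p q).map (addRightEmbedding (-j)) := by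
    rw [Finset.map_add_right_Ioc]
    congr 1 <;> ring
  rw [this, Finset.sum_map]
  rfl

private lemma sum_Ioc_split (p q r : ℤ) (hpq : p ≤ q) (hqr : q ≤ r) (f : ℤ → ℤ) :
    ∑ i ∈ Finset.Ioc p r, f i = (∑ i ∈ Finset.Ioc p q, f i) + ∑ i ∈ Finset.Ioc q r, f i := by
  rw [← Finset.sum_union (by
    simp only [Finset.disjoint_left, Finset.mem_Ioc]
    intro x hx hx'; omega), Finset.Ioc_union_Ioc_eq_Ioc hpq hqr]

private lemma IccIoc (p q : ℤ) : Finset.Icc p q = Finset.Ioc (p - 1) q := by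
  ext x; simp only [Finset.mem_Icc, Finset.mem_Ioc]; omega

private lemma Icc_eq_Ioc (p q : ℤ) : Finset.Icc (p + 1) q = Finset.Ioc p q := by
  ext x; simp only [Finset.mem_Icc, Finset.mem_Ioc]; omega

end Aux

/-- Lemma 2 of [simax]: if `g ≺″ (d, a)` and `h_j < u ≤ h_{j+1}` for some
`j ∈ {0, …, s}` (with `h_0 = 0`, `h_{s+1} = m + s + 1`), then
`Σ_{i=u}^{m+s} g_i ≥ Σ_{i=u-j}^{m} d_i + Σ_{i=j+1}^{s} a_i`. -/
theorem statement1
    (m s : ℤ) (hm : 0 ≤ m) (hs : 0 ≤ s)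
    (d a g : ℤ → ℤ)
    (hd : AntitoneOn d (Set.Icc 1 m))
    (ha : AntitoneOn a (Set.Icc 1 s))
    (hg : AntitoneOn g (Set.Icc 1 (m + s)))
    (hmaj : WeakMaj m s d a g)
    (j u : ℤ) (hj : j ∈ Finset.Icc (0 : ℤ) s)
    (hu1 : (if j = 0 then 0 else hIdx m s d g j) < u)
    (hu2 : u ≤ (if j = s then m + s + 1 else hIdx m s d g (j + 1))) :
    (∑ i ∈ Finset.Icc (u - j) m, d i) + (∑ i ∈ Finset.Icc (j + 1) s, a i) ≤
      ∑ i ∈ Finset.Icc u (m + s), g i := by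
  simp only [Finset.mem_Icc] at hj
  obtain ⟨hmaj1, hmaj2, hmaj3⟩ := hmaj
  set H : ℤ := if j = 0 then 0 else hIdx m s d g j with hHdef
  have hHu : H < u := hu1
  have hjH : j ≤ H := by
    by_cases h0 : j = 0
    · simp [hHdef, h0]
    · rw [hHdef, if_neg h0]; exact le_hIdx hm j (by omega) hj.2
  have hHm : H ≤ m + j := by
    by_cases h0 : j = 0
    · simp [hHdef, h0]; omega
    · rw [hHdef, if_neg h0]; exact hIdx_le hm j (by omega) hj.2
  have hud : u - j - 1 ≤ m := by
    by_cases hjs' : j = s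
    · rw [if_pos hjs'] at hu2; omega
    · rw [if_neg hjs'] at hu2
      have := hIdx_le (s := s) (d := d) (g := g) hm (j + 1) (by omega) (by omega)
      omega
  have hum : u - 1 ≤ m + s := by omega
  have base : (∑ i ∈ Finset.Ioc (H - j) m, d i) + (∑ i ∈ Finset.Ioc j s, a i) ≤
      ∑ i ∈ Finset.Ioc H (m + s), g i := by
    by_cases h0 : j = 0
    · have e1 : Finset.Icc (1 : ℤ) m = Finset.Ioc (H - j) m := by
        rw [IccIoc]; congr 1; rw [hHdef, if_pos h0]; omega
      have e2 : Finset.Icc (1 : ℤ) s = Finset.Ioc j s := by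
        rw [IccIoc]; congr 1; omega
      have e3 : Finset.Icc (1 : ℤ) (m + s) = Finset.Ioc H (m + s) := by
        rw [IccIoc]; congr 1; rw [hHdef, if_pos h0]; omega
      rw [← e1, ← e2, ← e3]; exact hmaj3
    · have h2 := hmaj2 j (Finset.mem_Icc.mpr ⟨by omega, hj.2⟩)
      have e1 : Finset.Icc (hIdx m s d g j - j + 1) m = Finset.Ioc (H - j) m := by
        rw [IccIoc]; congr 1; rw [hHdef, if_neg h0]; ring
      have e2 : Finset.Icc (j + 1) s = Finset.Ioc j s := by
        rw [IccIoc]; congr 1; ring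
      have e3 : Finset.Icc (hIdx m s d g j + 1) (m + s) = Finset.Ioc H (m + s) := by
        rw [IccIoc]; congr 1; rw [hHdef, if_neg h0]; ring
      rw [← e1, ← e2, ← e3]; exact h2
  have key : ∀ i ∈ Finset.Ioc H (u - 1), g i ≤ d (i - j) := by
    intro i hi
    simp only [Finset.mem_Ioc] at hi
    by_cases hjs' : j = s
    · have := hmaj1 (i - j) (Finset.mem_Icc.mpr ⟨by omega, by omega⟩)
      rwa [show i - j + s = i by omega] at this
    · have hlt : i < hIdx m s d g (j + 1) := by
        rw [if_neg hjs'] at hu2; omega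
      have hext := notMem_of_lt_hIdx hlt
      rw [show i - (j + 1) + 1 = i - j by ring] at hext
      exact (extract hj.1 (by omega) (by omega) hext).2
  have hsum1 : ∑ i ∈ Finset.Ioc H (u - 1), g i ≤ ∑ i ∈ Finset.Ioc (H - j) (u - 1 - j), d i := by
    rw [sum_shift]
    exact Finset.sum_le_sum key
  have hsplitg := sum_Ioc_split H (u - 1) (m + s) (by omega) hum g
  have hsplitd := sum_Ioc_split (H - j) (u - 1 - j) m (by omega) (by omega) d
  have goal' : (∑ i ∈ Finset.Ioc (u - 1 - j) m, d i) + (∑ i ∈ Finset.Ioc j s, a i) ≤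
      ∑ i ∈ Finset.Ioc (u - 1) (m + s), g i := by linarith
  have e1 : Finset.Icc (u - j) m = Finset.Ioc (u - 1 - j) m := by
    rw [IccIoc]; congr 1; ring
  have e2 : Finset.Icc (j + 1) s = Finset.Ioc j s := by
    rw [IccIoc]; congr 1; ring
  have e3 : Finset.Icc u (m + s) = Finset.Ioc (u - 1) (m + s) := by rw [IccIoc]
  rw [e1, e2, e3]; exact goal'
end
end

section
/- Let y ∈ {0,…,h′} and let j ∈ {1,…,m−1} be such that c^y > d_j ≥ d_{j+1} > c^{y+1}. If j+1 ∈ Δ, then j ∈ Δ. -/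
open Finset
open scoped Classical

noncomputable section

open GenMaj

/-- Lemma 4.1: if `c^y > d_j ≥ d_{j+1} > c^{y+1}` and `j+1 ∈ Δ`, then `j ∈ Δ`. -/
theorem statement2
    (m n s k : ℤ) (hm : 0 ≤ m) (hn : 0 ≤ n) (hs : 0 ≤ s) (hk : 0 ≤ k)
    (hmnsk : m + s = n + k)
    (a b c d : ℤ → ℤ)
    (ha : AntitoneOn a (Set.Icc 1 s)) (hb : AntitoneOn b (Set.Icc 1 k))
    (hcmono : AntitoneOn c (Set.Icc 1 n)) (hdmono : AntitoneOn d (Set.Icc 1 m))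
    (hcd : ∀ i ∈ Finset.Icc (1 : ℤ) n, ∀ j ∈ Finset.Icc (1 : ℤ) m, c i ≠ d j)
    (S Δ : Finset ℤ) (hSsub : S ⊆ Finset.Icc 1 n) (hΔsub : Δ ⊆ Finset.Icc 1 m)
    (hSdef : ∀ j ∈ Finset.Icc (1 : ℤ) n, (j ∈ S ↔ DeltaCond n k b d c Δ S j))
    (hΔdef : ∀ j ∈ Finset.Icc (1 : ℤ) m, (j ∈ Δ ↔ DeltaCond m s a c d S Δ j))
    (h h' : ℤ) (hcardΔ : h = (Δ.card : ℤ)) (hcardS : h' = (S.card : ℤ))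
    (D C : ℤ → ℤ)
    (hDmono : AntitoneOn D (Set.Icc 1 h))
    (hDval : Δ.val.map d = (Finset.Icc (1 : ℤ) h).val.map D)
    (hCmono : AntitoneOn C (Set.Icc 1 h'))
    (hCval : S.val.map c = (Finset.Icc (1 : ℤ) h').val.map C)
    (y : ℤ) (hy : y ∈ Finset.Icc (0 : ℤ) h')
    (j : ℤ) (hj : j ∈ Finset.Icc (1 : ℤ) (m - 1))
    (h1 : ((d j : ℝ) : EReal) < ext h' C y)
    (h2 : d (j + 1) ≤ d j)
    (h3 : ext h' C (y + 1) < ((d (j + 1) : ℝ) : EReal))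
    (hj1 : j + 1 ∈ Δ) :
    j ∈ Δ := by
  have hjm : j ∈ Finset.Icc (1:ℤ) m := by
    simp only [Finset.mem_Icc] at hj ⊢; omega
  have hj1m : (j + 1 : ℤ) ≤ m := by
    simp only [Finset.mem_Icc] at hj; omega
  have hy' := Finset.mem_Icc.mp hy
  -- key: for i ∈ S, c i < d j → c i < d (j+1)
  have key : ∀ i ∈ S, c i < d j → c i < d (j + 1) := by
    intro i hiS hlt
    have hmem : c i ∈ Multiset.map c S.val := Multiset.mem_map_of_mem c hiS
    rw [hCval] at hmem
    obtain ⟨t, htmem, htval⟩ := Multiset.mem_map.mp hmem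
    have ht : 1 ≤ t ∧ t ≤ h' := Finset.mem_Icc.mp (by exact htmem)
    have hty : y < t := by
      by_contra hle
      push_neg at hle
      have hy1 : (1:ℤ) ≤ y := le_trans ht.1 hle
      have hext : ext h' C y = ((C y : ℝ) : EReal) := by
        unfold GenMaj.ext; rw [if_neg (by omega), if_pos hy'.2]
      rw [hext] at h1
      have hdy : d j < C y := by exact_mod_cast h1
      have hmon := hCmono (Set.mem_Icc.mpr ⟨ht.1, ht.2⟩) (Set.mem_Icc.mpr ⟨hy1, hy'.2⟩) hle
      omega
    have hy1h : y + 1 ≤ h' := by omega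
    have hext : ext h' C (y+1) = ((C (y+1) : ℝ) : EReal) := by
      unfold GenMaj.ext; rw [if_neg (by omega), if_pos hy1h]
    rw [hext] at h3
    have hC1 : C (y + 1) < d (j + 1) := by exact_mod_cast h3
    have hmon := hCmono (Set.mem_Icc.mpr ⟨by omega, hy1h⟩)
      (Set.mem_Icc.mpr ⟨ht.1, ht.2⟩) (by omega)
    omega
  -- the S-filters coincide
  have hfilter : S.filter (fun i => c i < d j) = S.filter (fun i => c i < d (j+1)) := by
    apply Finset.filter_congr
    intro i hi
    exact ⟨key i hi, fun hlt => by omega⟩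
  -- the Δ-complement filters coincide
  have hΔfilter : (Finset.Icc (j+1) m).filter (fun i => i ∉ Δ)
      = (Finset.Icc (j+1+1) m).filter (fun i => i ∉ Δ) := by
    ext i
    simp only [Finset.mem_filter, Finset.mem_Icc]
    constructor
    · rintro ⟨⟨ha1, ha2⟩, ha3⟩
      refine ⟨⟨?_, ha2⟩, ha3⟩
      rcases eq_or_lt_of_le ha1 with he | hl
      · exact absurd (he ▸ hj1) ha3
      · omega
    · rintro ⟨⟨ha1, ha2⟩, ha3⟩; exact ⟨⟨by omega, ha2⟩, ha3⟩
  have hq : qd m s c d S Δ j = qd m s c d S Δ (j+1) := by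
    unfold qd; rw [hfilter, hΔfilter]
  -- from hj1, DeltaCond holds at j+1
  have hDC1 : DeltaCond m s a c d S Δ (j+1) := (hΔdef (j+1) (by
    simp only [Finset.mem_Icc] at hjm ⊢; omega)).mp hj1
  -- prove DeltaCond at j
  rw [hΔdef j hjm]
  intro ⟨hqle, hAB⟩
  apply hDC1
  refine ⟨by omega, ?_⟩
  rcases hAB with hA | hB
  · left
    obtain ⟨l, hlS, hlc, hlmin, hNa1, hcount⟩ := hA
    refine ⟨l, hlS, key l hlS hlc, fun l' hl' hcl' => hlmin l' hl' (by omega), hNa1, ?_⟩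
    -- card relations
    have hins : (Finset.Icc (j+1) m).filter (fun i => c l < d i)
        = insert (j+1) ((Finset.Icc (j+1+1) m).filter (fun i => c l < d i)) := by
      ext i
      simp only [Finset.mem_filter, Finset.mem_Icc, Finset.mem_insert]
      constructor
      · rintro ⟨⟨ha1, ha2⟩, ha3⟩
        rcases eq_or_lt_of_le ha1 with he | hl
        · exact Or.inl he.symm
        · exact Or.inr ⟨⟨by omega, ha2⟩, ha3⟩
      · rintro (rfl | ⟨⟨ha1, ha2⟩, ha3⟩)
        · exact ⟨⟨le_refl _, hj1m⟩, key l hlS hlc⟩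
        · exact ⟨⟨by omega, ha2⟩, ha3⟩
    have hcard1 : ((Finset.Icc (j+1) m).filter (fun i => c l < d i)).card
        = ((Finset.Icc (j+1+1) m).filter (fun i => c l < d i)).card + 1 := by
      rw [hins, Finset.card_insert_of_notMem]
      simp only [Finset.mem_filter, Finset.mem_Icc]
      omega
    have hcard2 : ((Finset.Icc (1:ℤ) s).filter (fun i => c l < a i ∧ a i < d (j+1))).card
        ≤ ((Finset.Icc (1:ℤ) s).filter (fun i => c l < a i ∧ a i < d j)).card := by
      apply Finset.card_le_card
      intro i hi
      simp only [Finset.mem_filter] at hi ⊢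
      exact ⟨hi.1, hi.2.1, by omega⟩
    omega
  · right
    rw [← hq, ← hΔfilter, ← hfilter]
    have : d (j+1) ≤ d j := h2
    omega
end
end

section
/- Let x ∈ {0,…,h} and let j ∈ {1,…,n−1} be such that d^x > c_j ≥ c_{j+1} > d^{x+1}. If j+1 ∈ S, then j ∈ S. -/
open Finset
open scoped Classical

noncomputable section

open GenMaj

/-- Lemma 4.3: if `d^x > c_j ≥ c_{j+1} > d^{x+1}` and `j+1 ∈ S`, then `j ∈ S`. -/
theorem statement3
    (m n s k : ℤ) (hm : 0 ≤ m) (hn : 0 ≤ n) (hs : 0 ≤ s) (hk : 0 ≤ k)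
    (hmnsk : m + s = n + k)
    (a b c d : ℤ → ℤ)
    (ha : AntitoneOn a (Set.Icc 1 s)) (hb : AntitoneOn b (Set.Icc 1 k))
    (hcmono : AntitoneOn c (Set.Icc 1 n)) (hdmono : AntitoneOn d (Set.Icc 1 m))
    (hcd : ∀ i ∈ Finset.Icc (1 : ℤ) n, ∀ j ∈ Finset.Icc (1 : ℤ) m, c i ≠ d j)
    (S Δ : Finset ℤ) (hSsub : S ⊆ Finset.Icc 1 n) (hΔsub : Δ ⊆ Finset.Icc 1 m)
    (hSdef : ∀ j ∈ Finset.Icc (1 : ℤ) n, (j ∈ S ↔ DeltaCond n k b d c Δ S j))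
    (hΔdef : ∀ j ∈ Finset.Icc (1 : ℤ) m, (j ∈ Δ ↔ DeltaCond m s a c d S Δ j))
    (h h' : ℤ) (hcardΔ : h = (Δ.card : ℤ)) (hcardS : h' = (S.card : ℤ))
    (D C : ℤ → ℤ)
    (hDmono : AntitoneOn D (Set.Icc 1 h))
    (hDval : Δ.val.map d = (Finset.Icc (1 : ℤ) h).val.map D)
    (hCmono : AntitoneOn C (Set.Icc 1 h'))
    (hCval : S.val.map c = (Finset.Icc (1 : ℤ) h').val.map C)
    (x : ℤ) (hx : x ∈ Finset.Icc (0 : ℤ) h)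
    (j : ℤ) (hj : j ∈ Finset.Icc (1 : ℤ) (n - 1))
    (h1 : ((c j : ℝ) : EReal) < ext h D x)
    (h2 : c (j + 1) ≤ c j)
    (h3 : ext h D (x + 1) < ((c (j + 1) : ℝ) : EReal))
    (hj1 : j + 1 ∈ S) :
    j ∈ S := by
  simp only [Finset.mem_Icc] at hj hx
  have hjIcc : j ∈ Finset.Icc (1 : ℤ) n := by rw [Finset.mem_Icc]; omega
  have hj1Icc : j + 1 ∈ Finset.Icc (1 : ℤ) n := by rw [Finset.mem_Icc]; omega
  -- key : for i ∈ Δ, d i < c j ↔ d i < c (j+1)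
  have key : ∀ i ∈ Δ, (d i < c j ↔ d i < c (j + 1)) := by
    intro i hiΔ
    constructor
    · intro hlt
      obtain ⟨t, htIcc, hDt⟩ : ∃ t ∈ Finset.Icc (1 : ℤ) h, D t = d i := by
        have hmem : d i ∈ Multiset.map d Δ.val := Multiset.mem_map_of_mem d hiΔ
        rw [hDval] at hmem
        obtain ⟨t, ht, hDt⟩ := Multiset.mem_map.mp hmem
        exact ⟨t, ht, hDt⟩
      rw [Finset.mem_Icc] at htIcc
      have hxt : x < t := by
        by_contra hcon
        push_neg at hcon
        have hx1 : 1 ≤ x := le_trans htIcc.1 hcon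
        have hext : ext h D x = ((D x : ℝ) : EReal) := by
          unfold GenMaj.ext; rw [if_neg (by omega), if_pos hx.2]
        rw [hext] at h1
        have hcjDx : c j < D x := by exact_mod_cast h1
        have hDxt : D x ≤ D t :=
          hDmono (Set.mem_Icc.mpr ⟨htIcc.1, le_trans hcon hx.2⟩)
            (Set.mem_Icc.mpr ⟨hx1, hx.2⟩) hcon
        omega
      have hx1h : x + 1 ≤ h := le_trans hxt htIcc.2
      have hext : ext h D (x + 1) = ((D (x + 1) : ℝ) : EReal) := by
        unfold GenMaj.ext; rw [if_neg (by omega), if_pos hx1h]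
      rw [hext] at h3
      have hD1c : D (x + 1) < c (j + 1) := by exact_mod_cast h3
      have hDtx : D t ≤ D (x + 1) :=
        hDmono (Set.mem_Icc.mpr ⟨by omega, hx1h⟩)
          (Set.mem_Icc.mpr ⟨htIcc.1, htIcc.2⟩) (by omega)
      omega
    · intro hlt; exact lt_of_lt_of_le hlt h2
  have hfilΔ : Δ.filter (fun i => d i < c j) = Δ.filter (fun i => d i < c (j + 1)) :=
    Finset.filter_congr (fun i hi => key i hi)
  have hfilS : (Finset.Icc (j + 1 + 1) n).filter (fun i => i ∉ S)
      = (Finset.Icc (j + 1) n).filter (fun i => i ∉ S) := by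
    apply Finset.ext; intro i
    simp only [Finset.mem_filter, Finset.mem_Icc]
    constructor
    · rintro ⟨⟨hi1, hi2⟩, hi3⟩; exact ⟨⟨by omega, hi2⟩, hi3⟩
    · rintro ⟨⟨hi1, hi2⟩, hi3⟩
      refine ⟨⟨?_, hi2⟩, hi3⟩
      rcases eq_or_lt_of_le hi1 with heq | hlt
      · exact absurd (heq ▸ hj1) hi3
      · omega
  have hq : qd n k d c Δ S (j + 1) = qd n k d c Δ S j := by
    unfold qd
    rw [hfilS, ← hfilΔ]
  by_contra hjS
  have hPj := not_not.mp ((hSdef j hjIcc).not.mp hjS)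
  have hDCj1 : DeltaCond n k b d c Δ S (j + 1) := (hSdef (j + 1) hj1Icc).mp hj1
  apply hDCj1
  obtain ⟨hqle, hab⟩ := hPj
  refine ⟨by rw [hq]; exact hqle, ?_⟩
  rcases hab with ⟨l, hlΔ, hlc, hlmin, hNa1, hcnt⟩ | hb
  · left
    refine ⟨l, hlΔ, (key l hlΔ).mp hlc,
      fun l' hl' hl'c => hlmin l' hl' (lt_of_lt_of_le hl'c h2), hNa1, ?_⟩
    have hA : (((Finset.Icc (j + 1 + 1) n).filter (fun i => d l < c i)).card : ℤ)
        ≤ (((Finset.Icc (j + 1) n).filter (fun i => d l < c i)).card : ℤ) := by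
      exact_mod_cast Finset.card_le_card
        (Finset.monotone_filter_left _ (Finset.Icc_subset_Icc (by omega) le_rfl))
    have hB : (((Finset.Icc (1 : ℤ) k).filter (fun i => d l < b i ∧ b i < c (j + 1))).card : ℤ)
        ≤ (((Finset.Icc (1 : ℤ) k).filter (fun i => d l < b i ∧ b i < c j)).card : ℤ) := by
      have hsub : (Finset.Icc (1 : ℤ) k).filter (fun i => d l < b i ∧ b i < c (j + 1))
          ⊆ (Finset.Icc (1 : ℤ) k).filter (fun i => d l < b i ∧ b i < c j) := by
        intro i hi
        simp only [Finset.mem_filter] at hi ⊢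
        exact ⟨hi.1, hi.2.1, lt_of_lt_of_le hi.2.2 h2⟩
      exact_mod_cast Finset.card_le_card hsub
    linarith
  · right
    rw [hq, hfilS, ← hfilΔ]
    linarith
end
end

section
/- Let j ∈ {1,…,m} be such that j ∈ Δ, and let y ∈ {0,…,h′} be such that c^y > d_j > c^{y+1}. Then t_y ≥ 0. -/
open Finset
open scoped Classical

noncomputable section

open GenMaj

/-- If `j ∈ Δ` and `c^y > d_j > c^{y+1}`, then `t_y ≥ 0`. -/
theorem statement7
    (m n s k : ℤ) (hm : 0 ≤ m) (hn : 0 ≤ n) (hs : 0 ≤ s) (hk : 0 ≤ k)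
    (hmnsk : m + s = n + k)
    (a b c d : ℤ → ℤ)
    (ha : AntitoneOn a (Set.Icc 1 s)) (hb : AntitoneOn b (Set.Icc 1 k))
    (hcmono : AntitoneOn c (Set.Icc 1 n)) (hdmono : AntitoneOn d (Set.Icc 1 m))
    (hcd : ∀ i ∈ Finset.Icc (1 : ℤ) n, ∀ j ∈ Finset.Icc (1 : ℤ) m, c i ≠ d j)
    (S Δ : Finset ℤ) (hSsub : S ⊆ Finset.Icc 1 n) (hΔsub : Δ ⊆ Finset.Icc 1 m)
    (hSdef : ∀ j ∈ Finset.Icc (1 : ℤ) n, (j ∈ S ↔ DeltaCond n k b d c Δ S j))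
    (hΔdef : ∀ j ∈ Finset.Icc (1 : ℤ) m, (j ∈ Δ ↔ DeltaCond m s a c d S Δ j))
    (h h' : ℤ) (hcardΔ : h = (Δ.card : ℤ)) (hcardS : h' = (S.card : ℤ))
    (D C : ℤ → ℤ)
    (hDmono : AntitoneOn D (Set.Icc 1 h))
    (hDval : Δ.val.map d = (Finset.Icc (1 : ℤ) h).val.map D)
    (hCmono : AntitoneOn C (Set.Icc 1 h'))
    (hCval : S.val.map c = (Finset.Icc (1 : ℤ) h').val.map C)
    (j : ℤ) (hjm : j ∈ Finset.Icc (1 : ℤ) m) (hjΔ : j ∈ Δ)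
    (y : ℤ) (hy : y ∈ Finset.Icc (0 : ℤ) h')
    (hy1 : ((d j : ℝ) : EReal) < ext h' C y)
    (hy2 : ext h' C (y + 1) < ((d j : ℝ) : EReal)) :
    0 ≤ tC m s h h' d Δ C y := by
  classical
  rw [Finset.mem_Icc] at hjm hy
  obtain ⟨hj1, hjm'⟩ := hjm
  obtain ⟨hy0, hyh'⟩ := hy
  have hΔcard0 : (0:ℤ) ≤ h := by rw [hcardΔ]; exact_mod_cast Nat.zero_le _
  -- real inequalities from the EReal hypotheses
  have hdjCy : 1 ≤ y → d j < C y := by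
    intro h1
    have he : ext h' C y = ((C y : ℝ) : EReal) := by
      unfold GenMaj.ext; rw [if_neg (by omega), if_pos hyh']
    rw [he] at hy1
    exact_mod_cast hy1
  have hCy1dj : y + 1 ≤ h' → C (y+1) < d j := by
    intro h1
    have he : ext h' C (y+1) = ((C (y+1) : ℝ) : EReal) := by
      unfold GenMaj.ext; rw [if_neg (by omega), if_pos h1]
    rw [he] at hy2
    exact_mod_cast hy2
  -- the maximal index J in Δ with d J > C (y+1)
  set T : Finset ℤ := Δ.filter (fun i => y + 1 ≤ h' → C (y+1) < d i) with hT
  have hjT : j ∈ T := Finset.mem_filter.mpr ⟨hjΔ, hCy1dj⟩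
  have hTne : T.Nonempty := ⟨j, hjT⟩
  set J := T.max' hTne with hJdef
  have hJT : J ∈ T := T.max'_mem hTne
  have hJΔ : J ∈ Δ := (Finset.mem_filter.mp hJT).1
  have hJprop : y + 1 ≤ h' → C (y+1) < d J := (Finset.mem_filter.mp hJT).2
  have hJmax : ∀ i ∈ T, i ≤ J := fun i hi => T.le_max' i hi
  have hJIcc : J ∈ Finset.Icc (1:ℤ) m := hΔsub hJΔ
  have hJ1 : 1 ≤ J := (Finset.mem_Icc.mp hJIcc).1
  have hJm : J ≤ m := (Finset.mem_Icc.mp hJIcc).2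
  have hjJ : j ≤ J := hJmax j hjT
  have hdJdj : d J ≤ d j := hdmono ⟨hj1, hjm'⟩ ⟨hJ1, hJm⟩ hjJ
  have hdJCy : 1 ≤ y → d J < C y := fun h1 => lt_of_le_of_lt hdJdj (hdjCy h1)
  -- counting: #{i ∈ S : c i < d J} = h' - y
  have cnt : ((S.filter (fun i => c i < d J)).card : ℤ) = h' - y := by
    have e1 : (S.filter (fun i => c i < d J)).card
        = ((Finset.Icc (1:ℤ) h').filter (fun i => C i < d J)).card := by
      have e0 : (S.filter (fun i => c i < d J)).card
          = (S.val.map c).countP (fun x => x < d J) := by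
        rw [Multiset.countP_map]
        rfl
      have e0' : ((Finset.Icc (1:ℤ) h').filter (fun i => C i < d J)).card
          = ((Finset.Icc (1:ℤ) h').val.map C).countP (fun x => x < d J) := by
        rw [Multiset.countP_map]
        rfl
      rw [e0, e0', hCval]
    have e2 : (Finset.Icc (1:ℤ) h').filter (fun i => C i < d J) = Finset.Icc (y+1) h' := by
      ext i
      simp only [Finset.mem_filter, Finset.mem_Icc]
      constructor
      · rintro ⟨⟨hi1, hih⟩, hCi⟩
        refine ⟨?_, hih⟩
        by_contra hc
        push_neg at hc
        have hiy : i ≤ y := by omega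
        have h1y : 1 ≤ y := by omega
        have : C y ≤ C i := hCmono ⟨hi1, by omega⟩ ⟨h1y, hyh'⟩ hiy
        have := hdJCy h1y
        omega
      · rintro ⟨hi1, hih⟩
        refine ⟨⟨by omega, hih⟩, ?_⟩
        have h1 : y + 1 ≤ h' := by omega
        have : C i ≤ C (y+1) := hCmono ⟨by omega, h1⟩ ⟨by omega, hih⟩ hi1
        have := hJprop h1
        omega
    rw [e1, e2, Int.card_Icc]
    omega
  -- rewrite the goal in a uniform way
  set W : Finset ℤ := (Finset.Icc (1:ℤ) m).filter
      (fun i => i ∉ Δ ∧ (1 ≤ y → d i < C y)) with hW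
  have goalEq : tC m s h h' d Δ C y = s - (h' - y) + (W.card : ℤ) := by
    unfold tC
    by_cases hy0' : y = 0
    · subst hy0'
      rw [if_pos rfl]
      have hWeq : W = Finset.Icc (1:ℤ) m \ Δ := by
        rw [hW]
        have hc : ∀ i ∈ Finset.Icc (1:ℤ) m,
            ((i ∉ Δ ∧ (1 ≤ (0:ℤ) → d i < C 0)) ↔ i ∉ Δ) := by
          intro i _
          constructor
          · rintro ⟨hi, -⟩; exact hi
          · intro hi; exact ⟨hi, by omega⟩
        rw [Finset.filter_congr hc, Finset.filter_not, Finset.filter_mem_eq_inter,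
          Finset.inter_eq_right.mpr hΔsub]
      have hcard : (Finset.Icc (1:ℤ) m \ Δ).card + Δ.card = (Finset.Icc (1:ℤ) m).card :=
        Finset.card_sdiff_add_card_eq_card hΔsub
      have hIcc : ((Finset.Icc (1:ℤ) m).card : ℤ) = m := by
        rw [Int.card_Icc]; omega
      rw [hWeq]
      have : ((Finset.Icc (1:ℤ) m \ Δ).card : ℤ) + (Δ.card : ℤ)
          = ((Finset.Icc (1:ℤ) m).card : ℤ) := by exact_mod_cast hcard
      omega
    · rw [if_neg hy0', if_neg (by omega : y ≠ h' + 1)]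
      have h1y : 1 ≤ y := by omega
      have hWeq : W = (Finset.Icc (1:ℤ) m).filter (fun i => i ∉ Δ ∧ d i < C y) := by
        rw [hW]
        exact Finset.filter_congr (fun i _ => by
          constructor
          · rintro ⟨hi, hd⟩; exact ⟨hi, hd h1y⟩
          · rintro ⟨hi, hd⟩; exact ⟨hi, fun _ => hd⟩)
      rw [hWeq]
  rw [goalEq]
  -- the DeltaCond property at J
  have DC : DeltaCond m s a c d S Δ J := (hΔdef J hJIcc).mp hJΔ
  unfold DeltaCond at DC
  by_cases hq : qd m s c d S Δ J ≤ s
  · -- case q_J ≤ s : condition (a) fails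
    have hnotA : ¬ (∃ l ∈ S, c l < d J ∧ (∀ l' ∈ S, c l' < d J → l ≤ l') ∧
        1 ≤ Na m s a c d S Δ l ∧
        (((Finset.Icc (J + 1) m).filter (fun i => c l < d i)).card : ℤ) +
            (((Finset.Icc (1:ℤ) s).filter (fun i => c l < a i ∧ a i < d J)).card : ℤ) + 1 ≤
          Na m s a c d S Δ l) := fun hPa => DC ⟨hq, Or.inl hPa⟩
    have hqval : s - ((S.filter (fun i => c i < d J)).card : ℤ) +
        (((Finset.Icc (J + 1) m).filter (fun i => i ∉ Δ)).card : ℤ) + 1 ≤ s := hq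
    have hNnonneg : (0:ℤ) ≤ (((Finset.Icc (J + 1) m).filter (fun i => i ∉ Δ)).card : ℤ) := by
      exact_mod_cast Nat.zero_le _
    have hyh : y + 1 ≤ h' := by omega
    -- the minimal l ∈ S with c l < d J
    have hfilne : (S.filter (fun i => c i < d J)).Nonempty := by
      rw [← Finset.card_pos]
      omega
    set l := (S.filter (fun i => c i < d J)).min' hfilne with hldef
    have hlmem : l ∈ S.filter (fun i => c i < d J) := Finset.min'_mem _ _
    have hlS : l ∈ S := (Finset.mem_filter.mp hlmem).1
    have hcl : c l < d J := (Finset.mem_filter.mp hlmem).2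
    have hlmin : ∀ l' ∈ S, c l' < d J → l ≤ l' := by
      intro l' hl' hcl'
      exact Finset.min'_le (S.filter (fun i => c i < d J)) l'
        (Finset.mem_filter.mpr ⟨hl', hcl'⟩)
    have hlIcc : l ∈ Finset.Icc (1:ℤ) n := hSsub hlS
    have hl1 : 1 ≤ l := (Finset.mem_Icc.mp hlIcc).1
    have hln : l ≤ n := (Finset.mem_Icc.mp hlIcc).2
    -- C (y+1) ≤ c l
    have hCy1cl : C (y+1) ≤ c l := by
      have hmem : C (y+1) ∈ (Finset.Icc (1:ℤ) h').val.map C :=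
        Multiset.mem_map.mpr ⟨y+1, by
          rw [Finset.mem_val, Finset.mem_Icc]; omega, rfl⟩
      rw [← hCval] at hmem
      obtain ⟨i₀, hi₀S, hi₀⟩ := Multiset.mem_map.mp hmem
      rw [Finset.mem_val] at hi₀S
      have hi₀lt : c i₀ < d J := by rw [hi₀]; exact hJprop hyh
      have hli₀ : l ≤ i₀ := hlmin i₀ hi₀S hi₀lt
      have hi₀Icc := hSsub hi₀S
      rw [Finset.mem_Icc] at hi₀Icc
      calc C (y+1) = c i₀ := hi₀.symm
        _ ≤ c l := hcmono ⟨hl1, hln⟩ ⟨hi₀Icc.1, hi₀Icc.2⟩ hli₀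
    -- #{i ∈ S : l < i} = h' - y - 1
    have cardSgt : ((S.filter (fun i => l < i)).card : ℤ) = h' - y - 1 := by
      have heq : S.filter (fun i => l < i) = (S.filter (fun i => c i < d J)).erase l := by
        ext i
        rw [Finset.mem_filter, Finset.mem_erase, Finset.mem_filter]
        constructor
        · rintro ⟨hiS, hli⟩
          have hiIcc := hSsub hiS
          rw [Finset.mem_Icc] at hiIcc
          have : c i ≤ c l := hcmono ⟨hl1, hln⟩ ⟨hiIcc.1, hiIcc.2⟩ (le_of_lt hli)
          exact ⟨by omega, hiS, by omega⟩
        · rintro ⟨hne, hiS, hci⟩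
          have := hlmin i hiS hci
          exact ⟨hiS, lt_of_le_of_ne this (Ne.symm hne)⟩
      rw [heq]
      rw [Finset.card_erase_of_mem hlmem]
      have hpos : 1 ≤ (S.filter (fun i => c i < d J)).card := by
        exact_mod_cast Finset.card_pos.mpr hfilne
      push_cast [Nat.cast_sub hpos]
      omega
    -- abbreviations
    set Acard := (((Finset.Icc (J + 1) m).filter (fun i => c l < d i)).card : ℤ) with hA
    set Bcard := (((Finset.Icc (1:ℤ) s).filter (fun i => c l < a i ∧ a i < d J)).card : ℤ) with hB
    set Mcard := (((Finset.Icc (1:ℤ) s).filter (fun i => c l < a i)).card : ℤ) with hM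
    set Wlcard := (((Finset.Icc (1:ℤ) m).filter (fun i => i ∉ Δ ∧ d i < c l)).card : ℤ) with hWl
    have hNa : Na m s a c d S Δ l = Mcard - s + (h' - y - 1) - Wlcard + 1 := by
      unfold Na
      rw [cardSgt]
    have hBM : Bcard ≤ Mcard := by
      rw [hB, hM]
      have hsub : (Finset.Icc (1:ℤ) s).filter (fun i => c l < a i ∧ a i < d J) ⊆
          (Finset.Icc (1:ℤ) s).filter (fun i => c l < a i) := by
        intro i hi
        rw [Finset.mem_filter] at hi ⊢
        exact ⟨hi.1, hi.2.1⟩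
      exact_mod_cast Finset.card_le_card hsub
    have hMnn : (0:ℤ) ≤ Mcard := by rw [hM]; exact_mod_cast Nat.zero_le _
    -- Wl-set ⊆ W
    have hWlsubW : (Finset.Icc (1:ℤ) m).filter (fun i => i ∉ Δ ∧ d i < c l) ⊆ W := by
      rw [hW]
      intro i hi
      rw [Finset.mem_filter] at hi ⊢
      obtain ⟨hiIcc, hiΔ, hdi⟩ := hi
      refine ⟨hiIcc, hiΔ, fun h1 => ?_⟩
      have := hdJCy h1
      omega
    have hWlW : Wlcard ≤ (W.card : ℤ) := by
      rw [hWl]; exact_mod_cast Finset.card_le_card hWlsubW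
    by_cases hna : 1 ≤ Na m s a c d S Δ l
    · -- Na ≥ 1, so the "among the smallest" condition fails
      have hAB : ¬ (Acard + Bcard + 1 ≤ Na m s a c d S Δ l) := fun hab =>
        hnotA ⟨l, hlS, hcl, hlmin, hna, hab⟩
      push_neg at hAB
      -- A-set ⊆ W, disjoint from Wl-set
      have hAsubW : (Finset.Icc (J + 1) m).filter (fun i => c l < d i) ⊆ W := by
        rw [hW]
        intro i hi
        rw [Finset.mem_filter, Finset.mem_Icc] at hi
        obtain ⟨⟨hi1, hi2⟩, hdi⟩ := hi
        rw [Finset.mem_filter, Finset.mem_Icc]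
        refine ⟨⟨by omega, hi2⟩, ?_, fun h1 => ?_⟩
        · intro hiΔ
          have hiT : i ∈ T := Finset.mem_filter.mpr ⟨hiΔ, fun _ => by omega⟩
          have := hJmax i hiT
          omega
        · have : d i ≤ d J := hdmono ⟨hJ1, hJm⟩ ⟨by omega, hi2⟩ (by omega)
          have := hdJCy h1
          omega
      have hdisj : Disjoint ((Finset.Icc (J + 1) m).filter (fun i => c l < d i))
          ((Finset.Icc (1:ℤ) m).filter (fun i => i ∉ Δ ∧ d i < c l)) := by
        rw [Finset.disjoint_left]
        intro i hi1 hi2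
        rw [Finset.mem_filter] at hi1 hi2
        omega
      have hunion : ((Finset.Icc (J + 1) m).filter (fun i => c l < d i)
            ∪ (Finset.Icc (1:ℤ) m).filter (fun i => i ∉ Δ ∧ d i < c l)) ⊆ W :=
        Finset.union_subset hAsubW hWlsubW
      have hcardsum : Acard + Wlcard ≤ (W.card : ℤ) := by
        have h1 := Finset.card_union_of_disjoint hdisj
        have h2 := Finset.card_le_card hunion
        rw [h1] at h2
        rw [hA, hWl]
        exact_mod_cast h2
      rw [hNa] at hAB
      have hBnn : (0:ℤ) ≤ Bcard := by rw [hB]; exact_mod_cast Nat.zero_le _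
      omega
    · -- Na ≤ 0
      rw [hNa] at hna
      push_neg at hna
      omega
  · -- case q_J > s
    push_neg at hq
    have hqval : s < s - ((S.filter (fun i => c i < d J)).card : ℤ) +
        (((Finset.Icc (J + 1) m).filter (fun i => i ∉ Δ)).card : ℤ) + 1 := hq
    have hsub : (Finset.Icc (J + 1) m).filter (fun i => i ∉ Δ) ⊆ W := by
      rw [hW]
      intro i hi
      rw [Finset.mem_filter, Finset.mem_Icc] at hi
      obtain ⟨⟨hi1, hi2⟩, hiΔ⟩ := hi
      rw [Finset.mem_filter, Finset.mem_Icc]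
      refine ⟨⟨by omega, hi2⟩, hiΔ, fun h1 => ?_⟩
      have : d i ≤ d J := hdmono ⟨hJ1, hJm⟩ ⟨by omega, hi2⟩ (by omega)
      have := hdJCy h1
      omega
    have hcardle : (((Finset.Icc (J + 1) m).filter (fun i => i ∉ Δ)).card : ℤ)
        ≤ (W.card : ℤ) := by exact_mod_cast Finset.card_le_card hsub
    omega
end
end

section
/- Let j ∈ {1,…,n} be such that j ∈ S, and let x ∈ {0,…,h} be such that d^x > c_j > d^{x+1}. Then t′_x ≥ 0. -/
open Finset
open scoped Classical

noncomputable section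

open GenMaj

/-- Key lemma: for every `j ∈ S` one has
`#{i ∈ Δ : d_i < c_j} ≤ k + #{i ∈ (j, n] : i ∉ S}` (i.e. `q'_j ≥ 1`). -/
lemma qge1_aux (m n k : ℤ) (hk : 0 ≤ k)
    (b c d : ℤ → ℤ)
    (hcmono : AntitoneOn c (Set.Icc 1 n)) (hdmono : AntitoneOn d (Set.Icc 1 m))
    (S Δ : Finset ℤ) (hSsub : S ⊆ Finset.Icc 1 n) (hΔsub : Δ ⊆ Finset.Icc 1 m)
    (hSdef : ∀ j ∈ Finset.Icc (1 : ℤ) n, (j ∈ S ↔ DeltaCond n k b d c Δ S j)) :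
    ∀ j ∈ Finset.Icc (1 : ℤ) n, j ∈ S →
      ((Δ.filter (fun i => d i < c j)).card : ℤ) ≤
        k + (((Finset.Icc (j + 1) n).filter (fun i => i ∉ S)).card : ℤ) := by
  have main : ∀ N : ℕ, ∀ j, j ∈ Finset.Icc (1 : ℤ) n → j ∈ S → (n - j).toNat = N →
      ((Δ.filter (fun i => d i < c j)).card : ℤ) ≤
        k + (((Finset.Icc (j + 1) n).filter (fun i => i ∉ S)).card : ℤ) := by
    intro N
    induction N using Nat.strong_induction_on with
    | _ N IH =>
      intro j hj hjS hN
      by_contra hcon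
      push_neg at hcon
      obtain ⟨hj1, hj2⟩ := Finset.mem_Icc.mp hj
      have hjset : j ∈ Set.Icc (1 : ℤ) n := Set.mem_Icc.mpr ⟨hj1, hj2⟩
      have hDC := (hSdef j hj).mp hjS
      unfold DeltaCond at hDC
      have hq : qd n k d c Δ S j ≤ k := by unfold qd; omega
      have hY1 := fun hy => hDC ⟨hq, Or.inl hy⟩
      have hAcard : 0 < (Δ.filter (fun i => d i < c j)).card := by omega
      have hAne : (Δ.filter (fun i => d i < c j)).Nonempty := Finset.card_pos.mp hAcard
      obtain ⟨l, hlmem, hlminall⟩ :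
          ∃ l ∈ Δ.filter (fun i => d i < c j),
            ∀ i ∈ Δ.filter (fun i => d i < c j), l ≤ i :=
        ⟨_, Finset.min'_mem _ hAne, fun i hi => Finset.min'_le _ i hi⟩
      rw [Finset.mem_filter] at hlmem
      obtain ⟨hlΔ, hld⟩ := hlmem
      have hlmin : ∀ l' ∈ Δ, d l' < c j → l ≤ l' := fun l' h1 h2 =>
        hlminall l' (Finset.mem_filter.mpr ⟨h1, h2⟩)
      have hlm := Finset.mem_Icc.mp (hΔsub hlΔ)
      have hlset : l ∈ Set.Icc (1 : ℤ) m := Set.mem_Icc.mpr hlm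
      have hAerase : Δ.filter (fun i => l < i) = (Δ.filter (fun i => d i < c j)).erase l := by
        ext i
        simp only [Finset.mem_filter, Finset.mem_erase]
        constructor
        · rintro ⟨hiΔ, hli⟩
          have him := Finset.mem_Icc.mp (hΔsub hiΔ)
          have hdile : d i ≤ d l := hdmono hlset (Set.mem_Icc.mpr him) (le_of_lt hli)
          exact ⟨by omega, hiΔ, lt_of_le_of_lt hdile hld⟩
        · rintro ⟨hne, hiΔ, hdi⟩
          exact ⟨hiΔ, lt_of_le_of_ne (hlmin i hiΔ hdi) (Ne.symm hne)⟩
      have hEcard : (Δ.filter (fun i => l < i)).card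
          = (Δ.filter (fun i => d i < c j)).card - 1 := by
        have hlinA : l ∈ Δ.filter (fun i => d i < c j) := Finset.mem_filter.mpr ⟨hlΔ, hld⟩
        rw [hAerase, Finset.card_erase_of_mem hlinA]
      have hB'sub : (Finset.Icc (1 : ℤ) n).filter (fun i => i ∉ S ∧ c i < d l) ⊆
          (Finset.Icc (j + 1) n).filter (fun i => i ∉ S) := by
        intro i hi
        simp only [Finset.mem_filter, Finset.mem_Icc] at hi ⊢
        obtain ⟨⟨h1, h2⟩, hiS, hci⟩ := hi
        have hcij : c i < c j := lt_trans hci hld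
        have hji : j < i := by
          by_contra hle
          push_neg at hle
          have := hcmono (Set.mem_Icc.mpr ⟨h1, h2⟩) hjset hle
          omega
        exact ⟨⟨by omega, h2⟩, hiS⟩
      have hB'le : (((Finset.Icc (1 : ℤ) n).filter (fun i => i ∉ S ∧ c i < d l)).card : ℤ)
          ≤ (((Finset.Icc (j + 1) n).filter (fun i => i ∉ S)).card : ℤ) := by
        exact_mod_cast Finset.card_le_card hB'sub
      have hNa : 1 ≤ Na n k b d c Δ S l := by unfold Na; omega
      have hcnt : ¬ ((((Finset.Icc (j + 1) n).filter (fun i => d l < c i)).card : ℤ) +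
          (((Finset.Icc (1 : ℤ) k).filter (fun i => d l < b i ∧ b i < c j)).card : ℤ) + 1 ≤
          Na n k b d c Δ S l) := fun hc => hY1 ⟨l, hlΔ, hld, hlmin, hNa, hc⟩
      have hcnt2le : (((Finset.Icc (1 : ℤ) k).filter (fun i => d l < b i ∧ b i < c j)).card : ℤ)
          ≤ (((Finset.Icc (1 : ℤ) k).filter (fun i => d l < b i)).card : ℤ) := by
        refine Int.ofNat_le.mpr (Finset.card_le_card ?_)
        intro i hi
        simp only [Finset.mem_filter] at hi ⊢
        exact ⟨hi.1, hi.2.1⟩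
      have hkey : ((Δ.filter (fun i => d i < c j)).card : ℤ) ≤
          k + (((Finset.Icc (1 : ℤ) n).filter (fun i => i ∉ S ∧ c i < d l)).card : ℤ) +
          (((Finset.Icc (j + 1) n).filter (fun i => d l < c i)).card : ℤ) := by
        unfold Na at hcnt
        omega
      have hj2ex : ∃ i ∈ Finset.Icc (j + 1) n, i ∈ S ∧ d l < c i := by
        by_contra hno
        push_neg at hno
        have hsub1 : (Finset.Icc (j + 1) n).filter (fun i => d l < c i) ⊆
            (Finset.Icc (j + 1) n).filter (fun i => i ∉ S) := by
          intro i hi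
          simp only [Finset.mem_filter] at hi ⊢
          exact ⟨hi.1, fun hiS => absurd hi.2 (not_lt.mpr (hno i hi.1 hiS))⟩
        have hdisj : Disjoint ((Finset.Icc (1 : ℤ) n).filter (fun i => i ∉ S ∧ c i < d l))
            ((Finset.Icc (j + 1) n).filter (fun i => d l < c i)) := by
          rw [Finset.disjoint_left]
          intro i h1 h2
          simp only [Finset.mem_filter] at h1 h2
          exact absurd h2.2 (lt_asymm h1.2.2)
        have hUnion : ((Finset.Icc (1 : ℤ) n).filter (fun i => i ∉ S ∧ c i < d l)) ∪
            ((Finset.Icc (j + 1) n).filter (fun i => d l < c i)) ⊆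
            (Finset.Icc (j + 1) n).filter (fun i => i ∉ S) :=
          Finset.union_subset hB'sub hsub1
        have hcards := Finset.card_le_card hUnion
        rw [Finset.card_union_of_disjoint hdisj] at hcards
        omega
      obtain ⟨j₂, hj₂mem, hj₂S, hj₂c⟩ := hj2ex
      obtain ⟨hj₂1, hj₂2⟩ := Finset.mem_Icc.mp hj₂mem
      have hIH := IH (n - j₂).toNat (by omega) j₂ (Finset.mem_Icc.mpr ⟨by omega, hj₂2⟩) hj₂S rfl
      have hAsub : Δ.filter (fun i => d i < c j) ⊆ Δ.filter (fun i => d i < c j₂) := by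
        intro i hi
        rw [Finset.mem_filter] at hi ⊢
        obtain ⟨hiΔ, hdi⟩ := hi
        have hli : l ≤ i := hlmin i hiΔ hdi
        have him := Finset.mem_Icc.mp (hΔsub hiΔ)
        have hdile : d i ≤ d l := hdmono hlset (Set.mem_Icc.mpr him) hli
        exact ⟨hiΔ, lt_of_le_of_lt hdile hj₂c⟩
      have hPsub : (Finset.Icc (j₂ + 1) n).filter (fun i => i ∉ S) ⊆
          (Finset.Icc (j + 1) n).filter (fun i => i ∉ S) := by
        intro i hi
        simp only [Finset.mem_filter, Finset.mem_Icc] at hi ⊢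
        exact ⟨⟨by omega, hi.1.2⟩, hi.2⟩
      have c1 := Finset.card_le_card hAsub
      have c2 := Finset.card_le_card hPsub
      omega
  intro j hj hjS
  exact main (n - j).toNat j hj hjS rfl

/-- If `j ∈ S` and `d^x > c_j > d^{x+1}`, then `t'_x ≥ 0`. -/
theorem statement8
    (m n s k : ℤ) (hm : 0 ≤ m) (hn : 0 ≤ n) (hs : 0 ≤ s) (hk : 0 ≤ k)
    (hmnsk : m + s = n + k)
    (a b c d : ℤ → ℤ)
    (ha : AntitoneOn a (Set.Icc 1 s)) (hb : AntitoneOn b (Set.Icc 1 k))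
    (hcmono : AntitoneOn c (Set.Icc 1 n)) (hdmono : AntitoneOn d (Set.Icc 1 m))
    (hcd : ∀ i ∈ Finset.Icc (1 : ℤ) n, ∀ j ∈ Finset.Icc (1 : ℤ) m, c i ≠ d j)
    (S Δ : Finset ℤ) (hSsub : S ⊆ Finset.Icc 1 n) (hΔsub : Δ ⊆ Finset.Icc 1 m)
    (hSdef : ∀ j ∈ Finset.Icc (1 : ℤ) n, (j ∈ S ↔ DeltaCond n k b d c Δ S j))
    (hΔdef : ∀ j ∈ Finset.Icc (1 : ℤ) m, (j ∈ Δ ↔ DeltaCond m s a c d S Δ j))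
    (h h' : ℤ) (hcardΔ : h = (Δ.card : ℤ)) (hcardS : h' = (S.card : ℤ))
    (D C : ℤ → ℤ)
    (hDmono : AntitoneOn D (Set.Icc 1 h))
    (hDval : Δ.val.map d = (Finset.Icc (1 : ℤ) h).val.map D)
    (hCmono : AntitoneOn C (Set.Icc 1 h'))
    (hCval : S.val.map c = (Finset.Icc (1 : ℤ) h').val.map C)
    (j : ℤ) (hjn : j ∈ Finset.Icc (1 : ℤ) n) (hjS : j ∈ S)
    (x : ℤ) (hx : x ∈ Finset.Icc (0 : ℤ) h)
    (hx1 : ((c j : ℝ) : EReal) < ext h D x)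
    (hx2 : ext h D (x + 1) < ((c j : ℝ) : EReal)) :
    0 ≤ tC n k h' h c S D x := by
  obtain ⟨hx0, hxh⟩ := Finset.mem_Icc.mp hx
  obtain ⟨hj1, hj2⟩ := Finset.mem_Icc.mp hjn
  have hjset : j ∈ Set.Icc (1 : ℤ) n := Set.mem_Icc.mpr ⟨hj1, hj2⟩
  have hq := qge1_aux m n k hk b c d hcmono hdmono S Δ hSsub hΔsub hSdef j hjn hjS
  have hx1' : 1 ≤ x → c j < D x := by
    intro h1
    have he : ext h D x = ((D x : ℝ) : EReal) := by
      unfold GenMaj.ext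
      rw [if_neg (by omega), if_pos hxh]
    rw [he] at hx1
    exact_mod_cast hx1
  have hx2' : x + 1 ≤ h → D (x + 1) < c j := by
    intro h1
    have he : ext h D (x + 1) = ((D (x + 1) : ℝ) : EReal) := by
      unfold GenMaj.ext
      rw [if_neg (by omega), if_pos h1]
    rw [he] at hx2
    exact_mod_cast hx2
  have hAcount : ((Δ.filter (fun i => d i < c j)).card : ℤ) = h - x := by
    have e1 : (Δ.filter (fun i => d i < c j)).card =
        Multiset.countP (fun v => v < c j) (Δ.val.map d) := by
      rw [Multiset.countP_map]
      rfl
    have e2 : ((Finset.Icc (1 : ℤ) h).filter (fun y => D y < c j)).card =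
        Multiset.countP (fun v => v < c j) ((Finset.Icc (1 : ℤ) h).val.map D) := by
      rw [Multiset.countP_map]
      rfl
    have e3 : (Finset.Icc (1 : ℤ) h).filter (fun y => D y < c j) = Finset.Icc (x + 1) h := by
      ext y
      simp only [Finset.mem_filter, Finset.mem_Icc]
      constructor
      · rintro ⟨⟨hy1, hy2⟩, hDy⟩
        refine ⟨?_, hy2⟩
        by_contra hcon2
        push_neg at hcon2
        have h1x : 1 ≤ x := by omega
        have hle : D x ≤ D y :=
          hDmono (Set.mem_Icc.mpr ⟨hy1, hy2⟩) (Set.mem_Icc.mpr ⟨h1x, hxh⟩) (by omega)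
        have := hx1' h1x
        omega
      · rintro ⟨hy1, hy2⟩
        refine ⟨⟨by omega, hy2⟩, ?_⟩
        have h1 : x + 1 ≤ h := le_trans hy1 hy2
        have hle : D y ≤ D (x + 1) :=
          hDmono (Set.mem_Icc.mpr ⟨by omega, h1⟩) (Set.mem_Icc.mpr ⟨by omega, hy2⟩) hy1
        exact lt_of_le_of_lt hle (hx2' h1)
    rw [e1, hDval, ← e2, e3, Int.card_Icc]
    omega
  by_cases hx0eq : x = 0
  · subst hx0eq
    have hWsub : (Finset.Icc (j + 1) n).filter (fun i => i ∉ S) ⊆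
        (Finset.Icc (1 : ℤ) n) \ S := by
      intro i hi
      simp only [Finset.mem_filter, Finset.mem_Icc, Finset.mem_sdiff] at hi ⊢
      exact ⟨⟨by omega, hi.1.2⟩, hi.2⟩
    have hWcard : ((Finset.Icc (1 : ℤ) n) \ S).card = (Finset.Icc (1 : ℤ) n).card - S.card :=
      Finset.card_sdiff_of_subset hSsub
    have hIccn : (Finset.Icc (1 : ℤ) n).card = n.toNat := by
      rw [Int.card_Icc]; omega
    have hSlen : S.card ≤ (Finset.Icc (1 : ℤ) n).card := Finset.card_le_card hSsub
    have hc := Finset.card_le_card hWsub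
    have htc : tC n k h' h c S D 0 = n + k - h' - h := by
      unfold tC
      norm_num
    rw [htc]
    omega
  · have h1x : 1 ≤ x := by omega
    have hcjDx := hx1' h1x
    have hPsub : (Finset.Icc (j + 1) n).filter (fun i => i ∉ S) ⊆
        (Finset.Icc (1 : ℤ) n).filter (fun i => i ∉ S ∧ c i < D x) := by
      intro i hi
      simp only [Finset.mem_filter, Finset.mem_Icc] at hi ⊢
      obtain ⟨⟨hi1, hi2⟩, hiS⟩ := hi
      have hci : c i ≤ c j := hcmono hjset (Set.mem_Icc.mpr ⟨by omega, hi2⟩) (by omega)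
      exact ⟨⟨by omega, hi2⟩, hiS, by omega⟩
    have hPc := Finset.card_le_card hPsub
    have htc : tC n k h' h c S D x = k - (h - x) +
        (((Finset.Icc (1 : ℤ) n).filter (fun i => i ∉ S ∧ c i < D x)).card : ℤ) := by
      unfold tC
      rw [if_neg hx0eq, if_neg (by omega : ¬ x = h + 1)]
    rw [htc]
    omega
end
end

section
/- With t_0 = m + s − h − h′ = t′_0, one has t_0 = t′_0 ≥ 0; that is, h + h′ ≤ m + s. -/
open Finset
open scoped Classical

noncomputable section

open GenMaj

lemma aux_key (m s n : ℤ) (hs : 0 ≤ s) (a c d : ℤ → ℤ)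
    (hcmono : AntitoneOn c (Set.Icc 1 n))
    (S Δ : Finset ℤ) (hSsub : S ⊆ Finset.Icc 1 n) (hΔsub : Δ ⊆ Finset.Icc 1 m)
    (hΔdef : ∀ j ∈ Finset.Icc (1 : ℤ) m, j ∈ Δ → DeltaCond m s a c d S Δ j)
    (hSne : S.Nonempty) (j0 : ℤ) (hj0 : j0 ∈ Δ)
    (hj0lt : c (S.min' hSne) < d j0) :
    (S.card : ℤ) + (Δ.card : ℤ) ≤ m + s := by
  by_contra hcon
  push_neg at hcon
  set j' := S.min' hSne with hj'def
  have hj'S : j' ∈ S := S.min'_mem hSne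
  have hj'min : ∀ i ∈ S, j' ≤ i := fun i hi => S.min'_le i hi
  have hj0m : j0 ∈ Finset.Icc (1:ℤ) m := hΔsub hj0
  have hm1 : (1:ℤ) ≤ m := by have := Finset.mem_Icc.mp hj0m; omega
  have hcardIcc : (Finset.Icc (1:ℤ) m).card = (m + 1 - 1).toNat := Int.card_Icc 1 m
  have hcompl : (Δ.card : ℤ) + (((Finset.Icc (1:ℤ) m) \ Δ).card : ℤ) = m := by
    have h1 := Finset.card_sdiff_add_card_eq_card hΔsub
    omega
  have hFne : j0 ∈ Δ.filter (fun i => c j' < d i) := Finset.mem_filter.mpr ⟨hj0, hj0lt⟩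
  have hFne' : (Δ.filter (fun i => c j' < d i)).Nonempty := ⟨j0, hFne⟩
  obtain ⟨J, hJΔ, hJlt, hJmax⟩ : ∃ J, J ∈ Δ ∧ c j' < d J ∧ ∀ i ∈ Δ, c j' < d i → i ≤ J := by
    refine ⟨(Δ.filter (fun i => c j' < d i)).max' hFne', ?_, ?_, ?_⟩
    · exact (Finset.mem_filter.mp (Finset.max'_mem _ hFne')).1
    · exact (Finset.mem_filter.mp (Finset.max'_mem _ hFne')).2
    · intro i hi hlt
      have hmem : i ∈ Δ.filter (fun i => c j' < d i) := Finset.mem_filter.mpr ⟨hi, hlt⟩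
      exact Finset.le_max' _ i hmem
  have hJm : J ∈ Finset.Icc (1:ℤ) m := hΔsub hJΔ
  have hJ1 : (1:ℤ) ≤ J := (Finset.mem_Icc.mp hJm).1
  have hScJ : ∀ i ∈ S, c i < d J := by
    intro i hi
    have h1 := Finset.mem_Icc.mp (hSsub hi)
    have h2 := Finset.mem_Icc.mp (hSsub hj'S)
    have hle : c i ≤ c j' := hcmono ⟨h2.1, h2.2⟩ ⟨h1.1, h1.2⟩ (hj'min i hi)
    exact lt_of_le_of_lt hle hJlt
  have hSfilter : S.filter (fun i => c i < d J) = S :=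
    Finset.filter_true_of_mem (fun i hi => hScJ i hi)
  have hSerase : S.filter (fun i => j' < i) = S.erase j' := by
    ext i
    simp only [Finset.mem_filter, Finset.mem_erase]
    constructor
    · rintro ⟨hi, hlt⟩; exact ⟨by omega, hi⟩
    · rintro ⟨hne, hi⟩
      exact ⟨hi, lt_of_le_of_ne (hj'min i hi) (Ne.symm hne)⟩
  have hSc1 : 1 ≤ S.card := Finset.card_pos.mpr hSne
  have hcerase : ((S.erase j').card : ℤ) = (S.card : ℤ) - 1 := by
    rw [Finset.card_erase_of_mem hj'S]; omega
  have hTsub : (Finset.Icc (J+1) m).filter (fun i => c j' < d i) ⊆ (Finset.Icc (1:ℤ) m) \ Δ := by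
    intro i hi
    obtain ⟨hiI, hlt⟩ := Finset.mem_filter.mp hi
    obtain ⟨hi1, hi2⟩ := Finset.mem_Icc.mp hiI
    refine Finset.mem_sdiff.mpr ⟨Finset.mem_Icc.mpr ⟨by omega, hi2⟩, ?_⟩
    intro hiΔ
    exact absurd (hJmax i hiΔ hlt) (by omega)
  have hXsub : (Finset.Icc (1:ℤ) m).filter (fun i => i ∉ Δ ∧ d i < c j') ⊆ (Finset.Icc (1:ℤ) m) \ Δ := by
    intro i hi
    obtain ⟨hiI, hni, _⟩ := Finset.mem_filter.mp hi
    exact Finset.mem_sdiff.mpr ⟨hiI, hni⟩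
  have hdisj : Disjoint ((Finset.Icc (J+1) m).filter (fun i => c j' < d i))
      ((Finset.Icc (1:ℤ) m).filter (fun i => i ∉ Δ ∧ d i < c j')) := by
    rw [Finset.disjoint_left]
    intro i hi1 hi2
    have h1 := (Finset.mem_filter.mp hi1).2
    have h2 := (Finset.mem_filter.mp hi2).2.2
    exact absurd (h1.trans h2) (lt_irrefl _)
  have hTX : ((Finset.Icc (J+1) m).filter (fun i => c j' < d i)).card +
      ((Finset.Icc (1:ℤ) m).filter (fun i => i ∉ Δ ∧ d i < c j')).card ≤
      ((Finset.Icc (1:ℤ) m) \ Δ).card := by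
    have h1 := Finset.card_union_of_disjoint hdisj
    have h2 := Finset.card_le_card (Finset.union_subset hTsub hXsub)
    omega
  have hBsub : (Finset.Icc (J+1) m).filter (fun i => i ∉ Δ) ⊆ (Finset.Icc (1:ℤ) m) \ Δ := by
    intro i hi
    obtain ⟨hiI, hni⟩ := Finset.mem_filter.mp hi
    obtain ⟨hi1, hi2⟩ := Finset.mem_Icc.mp hiI
    exact Finset.mem_sdiff.mpr ⟨Finset.mem_Icc.mpr ⟨by omega, hi2⟩, hni⟩
  have hq : qd m s c d S Δ J ≤ s := by
    unfold qd
    rw [hSfilter]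
    have hB := Finset.card_le_card hBsub
    omega
  have hDC := hΔdef J hJm hJΔ
  unfold DeltaCond at hDC
  have hXle := Finset.card_le_card hXsub
  have hNa1 : 1 ≤ Na m s a c d S Δ j' := by
    unfold Na
    rw [hSerase]
    omega
  have hNale : Na m s a c d S Δ j' ≤
      (((Finset.Icc (J+1) m).filter (fun i => c j' < d i)).card : ℤ) +
      (((Finset.Icc (1:ℤ) s).filter (fun i => c j' < a i ∧ a i < d J)).card : ℤ) := by
    by_contra hgt
    push_neg at hgt
    exact hDC ⟨hq, Or.inl ⟨j', hj'S, hScJ j' hj'S, fun l' hl' _ => hj'min l' hl', hNa1, by omega⟩⟩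
  have hT2le : ((Finset.Icc (1:ℤ) s).filter (fun i => c j' < a i ∧ a i < d J)).card ≤
      ((Finset.Icc (1:ℤ) s).filter (fun i => c j' < a i)).card := by
    apply Finset.card_le_card
    intro i hi
    obtain ⟨hiI, h1, _⟩ := Finset.mem_filter.mp hi
    exact Finset.mem_filter.mpr ⟨hiI, h1⟩
  unfold Na at hNale
  rw [hSerase] at hNale
  omega

/-- `t_0 = t'_0 ≥ 0`, i.e. `h + h' ≤ m + s`. -/
theorem statement9
    (m n s k : ℤ) (hm : 0 ≤ m) (hn : 0 ≤ n) (hs : 0 ≤ s) (hk : 0 ≤ k)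
    (hmnsk : m + s = n + k)
    (a b c d : ℤ → ℤ)
    (ha : AntitoneOn a (Set.Icc 1 s)) (hb : AntitoneOn b (Set.Icc 1 k))
    (hcmono : AntitoneOn c (Set.Icc 1 n)) (hdmono : AntitoneOn d (Set.Icc 1 m))
    (hcd : ∀ i ∈ Finset.Icc (1 : ℤ) n, ∀ j ∈ Finset.Icc (1 : ℤ) m, c i ≠ d j)
    (S Δ : Finset ℤ) (hSsub : S ⊆ Finset.Icc 1 n) (hΔsub : Δ ⊆ Finset.Icc 1 m)
    (hSdef : ∀ j ∈ Finset.Icc (1 : ℤ) n, (j ∈ S ↔ DeltaCond n k b d c Δ S j))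
    (hΔdef : ∀ j ∈ Finset.Icc (1 : ℤ) m, (j ∈ Δ ↔ DeltaCond m s a c d S Δ j))
    (h h' : ℤ) (hcardΔ : h = (Δ.card : ℤ)) (hcardS : h' = (S.card : ℤ))
    (D C : ℤ → ℤ)
    (hDmono : AntitoneOn D (Set.Icc 1 h))
    (hDval : Δ.val.map d = (Finset.Icc (1 : ℤ) h).val.map D)
    (hCmono : AntitoneOn C (Set.Icc 1 h'))
    (hCval : S.val.map c = (Finset.Icc (1 : ℤ) h').val.map C)
    :
    tC m s h h' d Δ C 0 = tC n k h' h c S D 0 ∧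
      0 ≤ tC m s h h' d Δ C 0 ∧ h + h' ≤ m + s := by
  have hcard_m : (Δ.card : ℤ) ≤ m := by
    have h1 := Finset.card_le_card hΔsub
    have h2 : (Finset.Icc (1:ℤ) m).card = (m + 1 - 1).toNat := Int.card_Icc 1 m
    omega
  have hcard_n : (S.card : ℤ) ≤ n := by
    have h1 := Finset.card_le_card hSsub
    have h2 : (Finset.Icc (1:ℤ) n).card = (n + 1 - 1).toNat := Int.card_Icc 1 n
    omega
  have hmain : h + h' ≤ m + s := by
    by_contra hc
    push_neg at hc
    have hSne : S.Nonempty := Finset.card_pos.mp (by omega)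
    have hΔne : Δ.Nonempty := Finset.card_pos.mp (by omega)
    have hj'S : S.min' hSne ∈ S := S.min'_mem hSne
    have hl'Δ : Δ.min' hΔne ∈ Δ := Δ.min'_mem hΔne
    have hj'n := hSsub hj'S
    have hl'm := hΔsub hl'Δ
    have hne := hcd _ hj'n _ hl'm
    rcases lt_or_gt_of_ne hne with hlt | hgt
    · have := aux_key m s n hs a c d hcmono S Δ hSsub hΔsub
        (fun j hj hjΔ => (hΔdef j hj).mp hjΔ) hSne (Δ.min' hΔne) hl'Δ hlt
      omega
    · have := aux_key n k m hk b d c hdmono Δ S hΔsub hSsub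
        (fun j hj hjS => (hSdef j hj).mp hjS) hΔne (S.min' hSne) hj'S hgt
      omega
  have e1 : tC m s h h' d Δ C 0 = m + s - h - h' := by unfold tC; simp
  have e2 : tC n k h' h c S D 0 = n + k - h' - h := by unfold tC; simp
  rw [e1, e2]
  omega
end
end

section
/- The numbers z_i + t_i for i = 1,…,h′ together with the numbers z′_i + t′_i for i = 1,…,h are pairwise distinct, and {z_i + t_i : i = 1,…,h′} ∪ {z′_i + t′_i : i = 1,…,h} = {t_0 + 1, t_0 + 2, …, m + s}. -/
open Finset
open scoped Classical

noncomputable section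

open GenMaj

/-!
The selected entries `c^1 ≥ … ≥ c^{h'}` and `d^1 ≥ … ≥ d^h` merge into one nonincreasing
sequence of length `h + h'`, with no ties between a `c`-entry and a `d`-entry. Counting the
`d_i` above and below `c^j`, and splitting those below according to membership in `Δ`, gives
`z_j + t_j = t_0 + j + #{i : d^i > c^j}`, i.e. `t_0` plus the position of `c^j` in the merge;
dually (using `m + s = n + k`) `z'_j + t'_j` is `t_0` plus the position of `d^j`. The positions in
such a merge are distinct and exhaust `1, …, h + h'`, and `t_0 + h + h' = m + s`.
-/

section MergeRank

variable {α : Type*} [LinearOrder α]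

def mergeRank (C D : ℤ → α) (q j : ℤ) : ℤ := j + #{i ∈ Icc 1 q | C j < D i}

variable (C D : ℤ → α) (p q : ℤ)

lemma mergeRank_strictMonoOn (hC : AntitoneOn C (Set.Icc 1 p)) :
    StrictMonoOn (mergeRank C D q) (Set.Icc 1 p) := by
  intro i hi j hj hij
  have : #{x ∈ Icc 1 q | C i < D x} ≤ #{x ∈ Icc 1 q | C j < D x} :=
    card_le_card <| monotone_filter_right _ fun _ _ => (hC hi hj hij.le).trans_lt
  unfold mergeRank
  omega

lemma mergeRank_mem_Icc (hq : 0 ≤ q) {j : ℤ} (hj : j ∈ Icc 1 p) :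
    mergeRank C D q j ∈ Icc 1 (p + q) := by
  have := card_filter_le (Icc 1 q) (fun i => C j < D i)
  rw [Int.card_Icc] at this
  rw [mem_Icc] at hj ⊢
  unfold mergeRank
  omega

lemma mergeRank_lt_of_lt (hC : AntitoneOn C (Set.Icc 1 p)) (hD : AntitoneOn D (Set.Icc 1 q))
    {j j' : ℤ} (hj : j ∈ Set.Icc 1 p) (hj' : j' ∈ Set.Icc 1 q) (hlt : C j < D j') :
    mergeRank D C p j' < mergeRank C D q j := by
  -- `D 1, …, D j'` all exceed `C j`, while no `C i` with `i ≥ j` exceeds `D j'`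
  have hD_above : Icc 1 j' ⊆ {i ∈ Icc 1 q | C j < D i} := fun i hi => by
    obtain ⟨hi1, hij'⟩ := mem_Icc.1 hi
    exact mem_filter.2 ⟨mem_Icc.2 ⟨hi1, hij'.trans hj'.2⟩,
      hlt.trans_le (hD ⟨hi1, hij'.trans hj'.2⟩ hj' hij')⟩
  have hC_above : {i ∈ Icc 1 p | D j' < C i} ⊆ Icc 1 (j - 1) := fun i hi => by
    obtain ⟨hi, hDC⟩ := mem_filter.1 hi
    obtain ⟨hi1, hip⟩ := mem_Icc.1 hi
    refine mem_Icc.2 ⟨hi1, ?_⟩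
    by_contra! hji
    exact (hC hj ⟨hi1, hip⟩ (by omega)).not_gt (hlt.trans hDC)
  have h1 := card_le_card hD_above
  have h2 := card_le_card hC_above
  rw [Int.card_Icc] at h1 h2
  unfold mergeRank
  have := hj.1
  have := hj'.1
  omega

lemma mergeRank_ne (hC : AntitoneOn C (Set.Icc 1 p)) (hD : AntitoneOn D (Set.Icc 1 q))
    {i j : ℤ} (hi : i ∈ Set.Icc 1 p) (hj : j ∈ Set.Icc 1 q) (hCD : C i ≠ D j) :
    mergeRank C D q i ≠ mergeRank D C p j := by
  rcases hCD.lt_or_gt with hlt | hlt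
  · exact (mergeRank_lt_of_lt C D p q hC hD hi hj hlt).ne'
  · exact (mergeRank_lt_of_lt D C q p hD hC hj hi hlt).ne

lemma image_mergeRank_union (hp : 0 ≤ p) (hq : 0 ≤ q)
    (hC : AntitoneOn C (Set.Icc 1 p)) (hD : AntitoneOn D (Set.Icc 1 q))
    (hCD : ∀ i ∈ Set.Icc 1 p, ∀ j ∈ Set.Icc 1 q, C i ≠ D j) :
    (Icc 1 p).image (mergeRank C D q) ∪ (Icc 1 q).image (mergeRank D C p) = Icc 1 (p + q) := by
  have hdisj :
      Disjoint ((Icc 1 p).image (mergeRank C D q)) ((Icc 1 q).image (mergeRank D C p)) := by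
    simp only [disjoint_left, mem_image]
    rintro _ ⟨i, hi, rfl⟩ ⟨j, hj, hji⟩
    have hi := mem_Icc.1 hi
    have hj := mem_Icc.1 hj
    exact mergeRank_ne C D p q hC hD hi hj (hCD i hi j hj) hji.symm
  refine eq_of_subset_of_card_le (union_subset ?_ ?_) ?_
  · exact image_subset_iff.2 fun j hj => mergeRank_mem_Icc C D p q hq hj
  · exact image_subset_iff.2 fun j hj => add_comm q p ▸ mergeRank_mem_Icc D C q p hp hj
  · rw [card_union_of_disjoint hdisj,
      card_image_of_injOn ((mergeRank_strictMonoOn C D p q hC).injOn.mono (by simp)),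
      card_image_of_injOn ((mergeRank_strictMonoOn D C q p hD).injOn.mono (by simp))]
    simp only [Int.card_Icc]
    omega

lemma image_add_mergeRank_union (hp : 0 ≤ p) (hq : 0 ≤ q)
    (hC : AntitoneOn C (Set.Icc 1 p)) (hD : AntitoneOn D (Set.Icc 1 q))
    (hCD : ∀ i ∈ Set.Icc 1 p, ∀ j ∈ Set.Icc 1 q, C i ≠ D j) (t : ℤ) :
    (Icc 1 p).image (t + mergeRank C D q ·) ∪ (Icc 1 q).image (t + mergeRank D C p ·) =
      Icc (t + 1) (t + (p + q)) := by
  rw [← image_add_left_Icc, ← image_mergeRank_union C D p q hp hq hC hD hCD, image_union,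
    image_image, image_image]
  rfl

end MergeRank

section Counting

variable {ι κ β : Type*}

lemma card_filter_lt_add_card_filter_gt [LinearOrder β] (T : Finset ι) (f : ι → β) (x : β)
    (hx : ∀ i ∈ T, f i ≠ x) : #{i ∈ T | x < f i} + #{i ∈ T | f i < x} = #T := by
  rw [← card_filter_add_card_filter_not (s := T) (fun i => x < f i)]
  congr 2
  exact filter_congr fun i hi => by simp [(hx i hi).le_iff_lt]

lemma card_filter_eq_of_map_val_eq {s : Finset ι} {t : Finset κ} {f : ι → β} {g : κ → β}
    (hst : s.val.map f = t.val.map g) (P : β → Prop) [DecidablePred P] :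
    #{i ∈ s | P (f i)} = #{i ∈ t | P (g i)} := by
  simpa [Multiset.countP_map, Finset.card, Finset.filter] using
    congrArg (Multiset.countP P) hst

lemma exists_mem_eq_of_map_val_eq {s : Finset ι} {t : Finset κ} {f : ι → β} {g : κ → β}
    (hst : s.val.map f = t.val.map g) {j : κ} (hj : j ∈ t) : ∃ i ∈ s, f i = g j := by
  have : g j ∈ s.val.map f := hst ▸ Multiset.mem_map_of_mem g (show j ∈ t.val from hj)
  simpa using Multiset.mem_map.1 this

end Counting

lemma zC_add_tC_eq_mergeRank {m s h h' : ℤ} {d C D : ℤ → ℤ} {Δ : Finset ℤ} (hm : 0 ≤ m)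
    (hΔ : Δ ⊆ Icc 1 m) (hh : h = #Δ) (hDval : Δ.val.map d = (Icc 1 h).val.map D)
    {j : ℤ} (hj : j ∈ Icc 1 h') (hne : ∀ i ∈ Icc 1 m, d i ≠ C j) :
    zC m h' d C j + tC m s h h' d Δ C j = tC m s h h' d Δ C 0 + mergeRank C D h j := by
  obtain ⟨hj1, hjh'⟩ := mem_Icc.1 hj
  have hsplit : #{i ∈ Icc 1 m | C j < d i} =
      #{i ∈ Δ | C j < d i} + #{i ∈ Icc 1 m \ Δ | C j < d i} := by
    rw [← card_union_of_disjoint (disjoint_filter_filter disjoint_sdiff), ← filter_union,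
      union_sdiff_of_subset hΔ]
  have hrest : #{i ∈ Icc 1 m \ Δ | C j < d i} + #{i ∈ Icc 1 m | i ∉ Δ ∧ d i < C j} =
      #(Icc 1 m) - #Δ := by
    have hsdiff : {i ∈ Icc 1 m | i ∉ Δ ∧ d i < C j} = {i ∈ Icc 1 m \ Δ | d i < C j} := by
      ext i
      simp [and_assoc]
    rw [hsdiff, card_filter_lt_add_card_filter_gt _ _ _ fun i hi => hne i (sdiff_subset hi),
      card_sdiff_of_subset hΔ]
  have hΔD : #{i ∈ Δ | C j < d i} = #{i ∈ Icc 1 h | C j < D i} :=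
    card_filter_eq_of_map_val_eq hDval (C j < ·)
  have hΔm := card_le_card hΔ
  rw [Int.card_Icc] at hrest hΔm
  simp only [zC, tC, mergeRank, ↓reduceIte, if_neg (show j ≠ 0 by omega),
    if_neg (show j ≠ h' + 1 by omega)]
  omega

theorem statement10_general
    (m n s k : ℤ) (hm : 0 ≤ m) (hn : 0 ≤ n)
    (hmnsk : m + s = n + k)
    (c d : ℤ → ℤ)
    (hcd : ∀ i ∈ Finset.Icc (1 : ℤ) n, ∀ j ∈ Finset.Icc (1 : ℤ) m, c i ≠ d j)
    (S Δ : Finset ℤ) (hSsub : S ⊆ Finset.Icc 1 n) (hΔsub : Δ ⊆ Finset.Icc 1 m)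
    (h h' : ℤ) (hcardΔ : h = (Δ.card : ℤ)) (hcardS : h' = (S.card : ℤ))
    (D C : ℤ → ℤ)
    (hDmono : AntitoneOn D (Set.Icc 1 h))
    (hDval : Δ.val.map d = (Finset.Icc (1 : ℤ) h).val.map D)
    (hCmono : AntitoneOn C (Set.Icc 1 h'))
    (hCval : S.val.map c = (Finset.Icc (1 : ℤ) h').val.map C)
    :
    (∀ i ∈ Finset.Icc (1 : ℤ) h', ∀ j ∈ Finset.Icc (1 : ℤ) h',
        zC m h' d C i + tC m s h h' d Δ C i = zC m h' d C j + tC m s h h' d Δ C j → i = j) ∧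
    (∀ i ∈ Finset.Icc (1 : ℤ) h, ∀ j ∈ Finset.Icc (1 : ℤ) h,
        zC n h c D i + tC n k h' h c S D i = zC n h c D j + tC n k h' h c S D j → i = j) ∧
    (∀ i ∈ Finset.Icc (1 : ℤ) h', ∀ j ∈ Finset.Icc (1 : ℤ) h,
        zC m h' d C i + tC m s h h' d Δ C i ≠ zC n h c D j + tC n k h' h c S D j) ∧
    ((Finset.Icc (1 : ℤ) h').image (fun i => zC m h' d C i + tC m s h h' d Δ C i) ∪
        (Finset.Icc (1 : ℤ) h).image (fun i => zC n h c D i + tC n k h' h c S D i) =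
      Finset.Icc (tC m s h h' d Δ C 0 + 1) (m + s)) := by
  have hC_c (j : ℤ) (hj : j ∈ Icc 1 h') : ∃ l ∈ Icc 1 n, c l = C j :=
    let ⟨l, hl, hlj⟩ := exists_mem_eq_of_map_val_eq hCval hj
    ⟨l, hSsub hl, hlj⟩
  have hD_d (j : ℤ) (hj : j ∈ Icc 1 h) : ∃ l ∈ Icc 1 m, d l = D j :=
    let ⟨l, hl, hlj⟩ := exists_mem_eq_of_map_val_eq hDval hj
    ⟨l, hΔsub hl, hlj⟩
  have hCD : ∀ i ∈ Set.Icc 1 h', ∀ j ∈ Set.Icc 1 h, C i ≠ D j := by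
    intro i hi j hj
    obtain ⟨l, hl, hli⟩ := hC_c i (mem_Icc.2 hi)
    obtain ⟨l', hl', hl'j⟩ := hD_d j (mem_Icc.2 hj)
    exact hli ▸ hl'j ▸ hcd l hl l' hl'
  set t₀ := tC m s h h' d Δ C 0 with ht₀
  have rank_C (j : ℤ) (hj : j ∈ Icc 1 h') :
      zC m h' d C j + tC m s h h' d Δ C j = t₀ + mergeRank C D h j := by
    refine zC_add_tC_eq_mergeRank hm hΔsub hcardΔ hDval hj fun i hi hdi => ?_
    obtain ⟨l, hl, hlj⟩ := hC_c j hj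
    exact hcd l hl i hi (hlj.trans hdi.symm)
  have rank_D (j : ℤ) (hj : j ∈ Icc 1 h) :
      zC n h c D j + tC n k h' h c S D j = t₀ + mergeRank D C h' j := by
    rw [zC_add_tC_eq_mergeRank hn hSsub hcardS hCval hj fun i hi hcj => ?_]
    · simp only [ht₀, tC, ↓reduceIte]
      omega
    obtain ⟨l, hl, hlj⟩ := hD_d j hj
    exact hcd i hi l hl (hcj.trans hlj.symm)
  refine ⟨fun i hi j hj hij => ?_, fun i hi j hj hij => ?_, fun i hi j hj => ?_, ?_⟩
  · rw [rank_C i hi, rank_C j hj] at hij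
    exact (mergeRank_strictMonoOn C D h' h hCmono).injOn (mem_Icc.1 hi) (mem_Icc.1 hj)
      (add_left_cancel hij)
  · rw [rank_D i hi, rank_D j hj] at hij
    exact (mergeRank_strictMonoOn D C h h' hDmono).injOn (mem_Icc.1 hi) (mem_Icc.1 hj)
      (add_left_cancel hij)
  · rw [rank_C i hi, rank_D j hj, Ne, add_right_inj]
    exact mergeRank_ne C D h' h hCmono hDmono (mem_Icc.1 hi) (mem_Icc.1 hj)
      (hCD i (mem_Icc.1 hi) j (mem_Icc.1 hj))
  · have hh : 0 ≤ h := hcardΔ ▸ Int.natCast_nonneg _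
    have hh' : 0 ≤ h' := hcardS ▸ Int.natCast_nonneg _
    rw [image_congr fun j hj => rank_C j hj, image_congr fun j hj => rank_D j hj,
      image_add_mergeRank_union C D h' h hh' hh hCmono hDmono hCD]
    congr 1
    simp only [ht₀, tC, ↓reduceIte]
    omega

/-- The numbers `z_i + t_i` (`i = 1,…,h'`) and `z'_i + t'_i` (`i = 1,…,h`) are pairwise distinct and fill `{t_0+1, …, m+s}`. -/
theorem statement10
    (m n s k : ℤ) (hm : 0 ≤ m) (hn : 0 ≤ n) (hs : 0 ≤ s) (hk : 0 ≤ k)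
    (hmnsk : m + s = n + k)
    (a b c d : ℤ → ℤ)
    (ha : AntitoneOn a (Set.Icc 1 s)) (hb : AntitoneOn b (Set.Icc 1 k))
    (hcmono : AntitoneOn c (Set.Icc 1 n)) (hdmono : AntitoneOn d (Set.Icc 1 m))
    (hcd : ∀ i ∈ Finset.Icc (1 : ℤ) n, ∀ j ∈ Finset.Icc (1 : ℤ) m, c i ≠ d j)
    (S Δ : Finset ℤ) (hSsub : S ⊆ Finset.Icc 1 n) (hΔsub : Δ ⊆ Finset.Icc 1 m)
    (hSdef : ∀ j ∈ Finset.Icc (1 : ℤ) n, (j ∈ S ↔ DeltaCond n k b d c Δ S j))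
    (hΔdef : ∀ j ∈ Finset.Icc (1 : ℤ) m, (j ∈ Δ ↔ DeltaCond m s a c d S Δ j))
    (h h' : ℤ) (hcardΔ : h = (Δ.card : ℤ)) (hcardS : h' = (S.card : ℤ))
    (D C : ℤ → ℤ)
    (hDmono : AntitoneOn D (Set.Icc 1 h))
    (hDval : Δ.val.map d = (Finset.Icc (1 : ℤ) h).val.map D)
    (hCmono : AntitoneOn C (Set.Icc 1 h'))
    (hCval : S.val.map c = (Finset.Icc (1 : ℤ) h').val.map C)
    :
    (∀ i ∈ Finset.Icc (1 : ℤ) h', ∀ j ∈ Finset.Icc (1 : ℤ) h',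
        zC m h' d C i + tC m s h h' d Δ C i = zC m h' d C j + tC m s h h' d Δ C j → i = j) ∧
    (∀ i ∈ Finset.Icc (1 : ℤ) h, ∀ j ∈ Finset.Icc (1 : ℤ) h,
        zC n h c D i + tC n k h' h c S D i = zC n h c D j + tC n k h' h c S D j → i = j) ∧
    (∀ i ∈ Finset.Icc (1 : ℤ) h', ∀ j ∈ Finset.Icc (1 : ℤ) h,
        zC m h' d C i + tC m s h h' d Δ C i ≠ zC n h c D j + tC n k h' h c S D j) ∧
    ((Finset.Icc (1 : ℤ) h').image (fun i => zC m h' d C i + tC m s h h' d Δ C i) ∪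
        (Finset.Icc (1 : ℤ) h).image (fun i => zC n h c D i + tC n k h' h c S D i) =
      Finset.Icc (tC m s h h' d Δ C 0 + 1) (m + s)) :=
  statement10_general m n s k hm hn hmnsk c d hcd S Δ hSsub hΔsub h h' hcardΔ hcardS D C hDmono
    hDval hCmono hCval
end
end

section
/- Suppose that c^{h′} ≥ a_s, and let j ∈ {1,…,m} be such that d_j > c^{h′}. Then q_j ≤ s; in addition, if j ∉ Δ then q_j < s. Here q_j = s − #{i ∈ S : c_i < d_j} + #{i > j : i ∉ Δ} + 1. -/
open Finset
open scoped Classical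

noncomputable section

open GenMaj

lemma pair_sum : ∀ (t : ℕ) (A B : Finset ℤ) (f g : ℤ → ℤ), B.card = t → A.card = t →
    (∀ x ∈ B, (B.filter (fun y => x ≤ y)).card ≤ (A.filter (fun v => f v < g x)).card) →
    (∑ v ∈ A, f v) + (A.card : ℤ) ≤ ∑ x ∈ B, g x := by
  intro t
  induction t with
  | zero =>
    intro A B f g hB hA _
    rw [Finset.card_eq_zero.mp hB, Finset.card_eq_zero.mp hA]
    simp
  | succ t ih =>
    intro A B f g hB hA hcond
    have hBne : B.Nonempty := Finset.card_pos.mp (by omega)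
    have hAne : A.Nonempty := Finset.card_pos.mp (by omega)
    set x0 := B.min' hBne with hx0
    have hx0B : x0 ∈ B := B.min'_mem hBne
    have h1 : B.filter (fun y => x0 ≤ y) = B :=
      Finset.filter_true_of_mem (fun y hy => B.min'_le y hy)
    have h2 : A.filter (fun v => f v < g x0) = A := by
      apply Finset.eq_of_subset_of_card_le (Finset.filter_subset _ _)
      have := hcond x0 hx0B
      rw [h1] at this
      omega
    have hAlt : ∀ v ∈ A, f v < g x0 := by
      intro v hv
      have : v ∈ A.filter (fun v => f v < g x0) := by rw [h2]; exact hv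
      exact (Finset.mem_filter.mp this).2
    obtain ⟨v0, hv0A, hv0max⟩ := A.exists_max_image f hAne
    have hA' : (A.erase v0).card = t := by rw [Finset.card_erase_of_mem hv0A]; omega
    have hB' : (B.erase x0).card = t := by rw [Finset.card_erase_of_mem hx0B]; omega
    have hcond' : ∀ x ∈ B.erase x0,
        ((B.erase x0).filter (fun y => x ≤ y)).card ≤
          ((A.erase v0).filter (fun v => f v < g x)).card := by
      intro x hx
      have hxB : x ∈ B := Finset.mem_of_mem_erase hx
      have hxne : x ≠ x0 := Finset.ne_of_mem_erase hx
      have hx0lt : ¬ (x ≤ x0) := by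
        have := B.min'_le x hxB
        omega
      have hBeq : (B.erase x0).filter (fun y => x ≤ y) = B.filter (fun y => x ≤ y) := by
        refine Finset.ext fun y => ?_
        simp only [Finset.mem_filter, Finset.mem_erase]
        constructor
        · rintro ⟨⟨_, hy⟩, hxy⟩; exact ⟨hy, hxy⟩
        · rintro ⟨hy, hxy⟩
          refine ⟨⟨?_, hy⟩, hxy⟩
          rintro rfl; exact hx0lt hxy
      rw [hBeq]
      by_cases hc : f v0 < g x
      · have h3 : (A.erase v0).filter (fun v => f v < g x) = A.erase v0 :=
          Finset.filter_true_of_mem (fun v hv =>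
            lt_of_le_of_lt (hv0max v (Finset.mem_of_mem_erase hv)) hc)
        rw [h3, hA']
        calc (B.filter (fun y => x ≤ y)).card ≤ (B.erase x0).card := by
              apply Finset.card_le_card
              intro y hy
              have := Finset.mem_filter.mp hy
              refine Finset.mem_erase.mpr ⟨?_, this.1⟩
              rintro rfl; exact hx0lt this.2
          _ = t := hB'
      · have h3 : (A.erase v0).filter (fun v => f v < g x) = A.filter (fun v => f v < g x) := by
          refine Finset.ext fun v => ?_
          simp only [Finset.mem_filter, Finset.mem_erase]
          constructor
          · rintro ⟨⟨_, hv⟩, hfv⟩; exact ⟨hv, hfv⟩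
          · rintro ⟨hv, hfv⟩
            refine ⟨⟨?_, hv⟩, hfv⟩
            rintro rfl; exact hc hfv
        rw [h3]
        exact hcond x hxB
    have hIH := ih (A.erase v0) (B.erase x0) f g hB' hA' hcond'
    have hsumA : f v0 + ∑ v ∈ A.erase v0, f v = ∑ v ∈ A, f v :=
      Finset.add_sum_erase A f hv0A
    have hsumB : g x0 + ∑ x ∈ B.erase x0, g x = ∑ x ∈ B, g x :=
      Finset.add_sum_erase B g hx0B
    have hlt : f v0 < g x0 := hAlt v0 hv0A
    rw [hA, hA'] at *
    push_cast at *
    linarith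


/-- Lemma: if `c^{h'} ≥ a_s` and `d_j > c^{h'}`, then `q_j ≤ s`; moreover if `j ∉ Δ` then `q_j < s`. -/
theorem statement11
    (m n s k : ℤ) (hm : 0 ≤ m) (hn : 0 ≤ n) (hs : 0 ≤ s) (hk : 0 ≤ k)
    (hmnsk : m + s = n + k)
    (a b c d : ℤ → ℤ)
    (ha : AntitoneOn a (Set.Icc 1 s)) (hb : AntitoneOn b (Set.Icc 1 k))
    (hcmono : AntitoneOn c (Set.Icc 1 n)) (hdmono : AntitoneOn d (Set.Icc 1 m))
    (hcd : ∀ i ∈ Finset.Icc (1 : ℤ) n, ∀ j ∈ Finset.Icc (1 : ℤ) m, c i ≠ d j)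
    (S Δ : Finset ℤ) (hSsub : S ⊆ Finset.Icc 1 n) (hΔsub : Δ ⊆ Finset.Icc 1 m)
    (hSdef : ∀ j ∈ Finset.Icc (1 : ℤ) n, (j ∈ S ↔ DeltaCond n k b d c Δ S j))
    (hΔdef : ∀ j ∈ Finset.Icc (1 : ℤ) m, (j ∈ Δ ↔ DeltaCond m s a c d S Δ j))
    (h h' : ℤ) (hcardΔ : h = (Δ.card : ℤ)) (hcardS : h' = (S.card : ℤ))
    (D C : ℤ → ℤ)
    (hDmono : AntitoneOn D (Set.Icc 1 h))
    (hDval : Δ.val.map d = (Finset.Icc (1 : ℤ) h).val.map D)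
    (hCmono : AntitoneOn C (Set.Icc 1 h'))
    (hCval : S.val.map c = (Finset.Icc (1 : ℤ) h').val.map C)
    (hca : ext s a s ≤ ext h' C h')
    (j : ℤ) (hj : j ∈ Finset.Icc (1 : ℤ) m)
    (hdj : ext h' C h' < ((d j : ℝ) : EReal)) :
    qd m s c d S Δ j ≤ s ∧ (j ∉ Δ → qd m s c d S Δ j < s) := by
  obtain ⟨hj1, hjm⟩ := Finset.mem_Icc.mp hj
  -- h' ≥ 1 and C h' < d j
  have hh'1 : 1 ≤ h' := by
    by_contra h0
    simp only [GenMaj.ext, if_pos (by omega : h' ≤ 0)] at hdj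
    exact not_top_lt hdj
  have hexC : ext h' C h' = ((C h' : ℝ) : EReal) := by
    simp only [GenMaj.ext]
    rw [if_neg (by omega), if_pos (le_refl h')]
  have hCdj : C h' < d j := by
    rw [hexC] at hdj
    exact_mod_cast hdj
  -- s ≥ 1 and a s ≤ C h'
  have hs1 : 1 ≤ s := by
    by_contra h0
    rw [hexC] at hca
    simp only [GenMaj.ext, if_pos (by omega : s ≤ 0)] at hca
    simp at hca
  have has : a s ≤ C h' := by
    rw [hexC] at hca
    simp only [GenMaj.ext, if_neg (by omega : ¬ s ≤ 0), if_pos (le_refl s)] at hca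
    exact_mod_cast hca
  -- the index realizing C h'
  have hmem : C h' ∈ (Finset.Icc (1 : ℤ) h').val.map C :=
    Multiset.mem_map.mpr ⟨h', Finset.mem_val.mpr (Finset.mem_Icc.mpr ⟨hh'1, le_refl h'⟩), rfl⟩
  rw [← hCval] at hmem
  obtain ⟨istar, histarv, hcistar⟩ := Multiset.mem_map.mp hmem
  have histarS : istar ∈ S := Finset.mem_val.mp histarv
  -- C h' is the minimum of c over S
  have hCmin : ∀ i ∈ S, C h' ≤ c i := by
    intro i hiS
    have hci : c i ∈ (Finset.Icc (1 : ℤ) h').val.map C := by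
      rw [← hCval]
      exact Multiset.mem_map.mpr ⟨i, Finset.mem_val.mpr hiS, rfl⟩
    obtain ⟨y, hyv, hcy⟩ := Multiset.mem_map.mp hci
    obtain ⟨hy1, hyh⟩ := Finset.mem_Icc.mp (Finset.mem_val.mp hyv)
    calc C h' ≤ C y := hCmono ⟨hy1, hyh⟩ ⟨hh'1, le_refl h'⟩ hyh
      _ = c i := hcy
  -- q_x ≤ s for any x ∉ Δ
  have hq_of_notΔ : ∀ x, 1 ≤ x → x ≤ m → x ∉ Δ →
      ((((Finset.Icc (x + 1) m).filter (fun i => i ∉ Δ)).card : ℤ) + 1 ≤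
        ((S.filter (fun i => c i < d x)).card : ℤ)) := by
    intro x h1 h2 hxΔ
    have hD : ¬ DeltaCond m s a c d S Δ x :=
      fun hDc => hxΔ ((hΔdef x (Finset.mem_Icc.mpr ⟨h1, h2⟩)).mpr hDc)
    simp only [DeltaCond, not_not] at hD
    have := hD.1
    simp only [qd] at this
    omega
  -- the main induction
  have key : ∀ t : ℕ, ∀ x, 1 ≤ x → x ≤ m → (m - x).toNat = t → C h' < d x →
      (((((Finset.Icc (x + 1) m).filter (fun i => i ∉ Δ)).card : ℤ) + 1 ≤
          ((S.filter (fun i => c i < d x)).card : ℤ)) ∧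
        (x ∉ Δ → ((((Finset.Icc (x + 1) m).filter (fun i => i ∉ Δ)).card : ℤ) + 2 ≤
          ((S.filter (fun i => c i < d x)).card : ℤ)))) := by
    intro t
    induction t using Nat.strong_induction_on with
    | _ t ih =>
    intro x hx1 hxm hxt hdx
    have hP : (((Finset.Icc (x + 1) m).filter (fun i => i ∉ Δ)).card : ℤ) + 1 ≤
        ((S.filter (fun i => c i < d x)).card : ℤ) := by
      rcases Finset.eq_empty_or_nonempty ((Finset.Icc (x + 1) m).filter (fun i => i ∉ Δ))
        with hT | hT
      · rw [hT]
        have hstar : istar ∈ S.filter (fun i => c i < d x) :=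
          Finset.mem_filter.mpr ⟨histarS, by rw [hcistar]; exact hdx⟩
        have := Finset.card_pos.mpr ⟨istar, hstar⟩
        simp only [Finset.card_empty]
        omega
      · set i1 := ((Finset.Icc (x + 1) m).filter (fun i => i ∉ Δ)).min' hT with hi1def
        have hi1T : i1 ∈ (Finset.Icc (x + 1) m).filter (fun i => i ∉ Δ) :=
          Finset.min'_mem _ hT
        obtain ⟨hi1I, hi1Δ⟩ := Finset.mem_filter.mp hi1T
        obtain ⟨hxi1, hi1m⟩ := Finset.mem_Icc.mp hi1I
        have hTerase : (Finset.Icc (i1 + 1) m).filter (fun i => i ∉ Δ) =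
            ((Finset.Icc (x + 1) m).filter (fun i => i ∉ Δ)).erase i1 := by
          refine Finset.ext fun y => ?_
          simp only [Finset.mem_filter, Finset.mem_Icc, Finset.mem_erase]
          constructor
          · rintro ⟨⟨hy1, hy2⟩, hyΔ⟩
            exact ⟨by omega, ⟨by omega, hy2⟩, hyΔ⟩
          · rintro ⟨hne, ⟨hy1, hy2⟩, hyΔ⟩
            have hymem : y ∈ (Finset.Icc (x + 1) m).filter (fun i => i ∉ Δ) := by
              simp only [Finset.mem_filter, Finset.mem_Icc]
              exact ⟨⟨hy1, hy2⟩, hyΔ⟩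
            have := Finset.min'_le _ y hymem
            rw [← hi1def] at this
            exact ⟨⟨by omega, hy2⟩, hyΔ⟩
        have hcard : ((Finset.Icc (i1 + 1) m).filter (fun i => i ∉ Δ)).card =
            ((Finset.Icc (x + 1) m).filter (fun i => i ∉ Δ)).card - 1 := by
          rw [hTerase, Finset.card_erase_of_mem hi1T]
        have hd_le : d i1 ≤ d x :=
          hdmono ⟨hx1, hxm⟩ ⟨by omega, hi1m⟩ (by omega)
        have hmono : (S.filter (fun i => c i < d i1)).card ≤
            (S.filter (fun i => c i < d x)).card := by
          apply Finset.card_le_card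
          intro y hy
          have := Finset.mem_filter.mp hy
          exact Finset.mem_filter.mpr ⟨this.1, lt_of_lt_of_le this.2 hd_le⟩
        have hTpos : 0 < ((Finset.Icc (x + 1) m).filter (fun i => i ∉ Δ)).card :=
          Finset.card_pos.mpr hT
        rcases lt_trichotomy (d i1) (C h') with hlt | heq | hgt
        · have hq := hq_of_notΔ i1 (by omega) hi1m hi1Δ
          have hins : insert istar (S.filter (fun i => c i < d i1)) ⊆
              S.filter (fun i => c i < d x) := by
            intro y hy
            rcases Finset.mem_insert.mp hy with rfl | hy'
            · exact Finset.mem_filter.mpr ⟨histarS, by rw [hcistar]; exact hdx⟩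
            · have := Finset.mem_filter.mp hy'
              exact Finset.mem_filter.mpr ⟨this.1, lt_of_lt_of_le this.2 hd_le⟩
          have hnotin : istar ∉ S.filter (fun i => c i < d i1) := by
            intro hmem'
            have := (Finset.mem_filter.mp hmem').2
            rw [hcistar] at this
            omega
          have hcle := Finset.card_le_card hins
          rw [Finset.card_insert_of_notMem hnotin] at hcle
          omega
        · exfalso
          have := hcd istar (hSsub histarS) i1 (Finset.mem_Icc.mpr ⟨by omega, hi1m⟩)
          rw [hcistar, heq] at this
          exact this rfl
        · have ht' : (m - i1).toNat < t := by omega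
          have := (ih _ ht' i1 (by omega) hi1m rfl hgt).2 hi1Δ
          omega
    refine ⟨hP, ?_⟩
    intro hxΔ
    by_contra hcon
    push_neg at hcon
    have hMeq : ((S.filter (fun i => c i < d x)).card : ℤ) =
        (((Finset.Icc (x + 1) m).filter (fun i => i ∉ Δ)).card : ℤ) + 1 := by omega
    have hD : ¬ DeltaCond m s a c d S Δ x :=
      fun hDc => hxΔ ((hΔdef x (Finset.mem_Icc.mpr ⟨hx1, hxm⟩)).mpr hDc)
    simp only [DeltaCond, not_not] at hD
    obtain ⟨hq, hab⟩ := hD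
    have hqs : qd m s c d S Δ x = s := by
      simp only [qd]
      omega
    rcases hab with ⟨l, hlS, hcl, hlmin, _, hcrit⟩ | hsum
    · -- case (a)
      simp only [Na] at hcrit
      have hSL : S.filter (fun i => l < i) = (S.filter (fun i => c i < d x)).erase l := by
        refine Finset.ext fun i => ?_
        simp only [Finset.mem_filter, Finset.mem_erase]
        constructor
        · rintro ⟨hiS, hli⟩
          obtain ⟨hl1, hln⟩ := Finset.mem_Icc.mp (hSsub hlS)
          obtain ⟨hi1, hin⟩ := Finset.mem_Icc.mp (hSsub hiS)
          have : c i ≤ c l := hcmono ⟨hl1, hln⟩ ⟨hi1, hin⟩ (le_of_lt hli)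
          exact ⟨by omega, hiS, lt_of_le_of_lt this hcl⟩
        · rintro ⟨hne, hiS, hci⟩
          have := hlmin i hiS hci
          exact ⟨hiS, by omega⟩
      have hlmem : l ∈ S.filter (fun i => c i < d x) := Finset.mem_filter.mpr ⟨hlS, hcl⟩
      have hSLcard : (S.filter (fun i => l < i)).card =
          (S.filter (fun i => c i < d x)).card - 1 := by
        rw [hSL, Finset.card_erase_of_mem hlmem]
      have hlpos : 0 < (S.filter (fun i => c i < d x)).card := Finset.card_pos.mpr ⟨l, hlmem⟩
      have hasl : a s ≤ c l := le_trans has (hCmin l hlS)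
      have hma : ((Finset.Icc (1 : ℤ) s).filter (fun i => c l < a i)).card <
          (Finset.Icc (1 : ℤ) s).card := by
        apply Finset.card_lt_card
        rw [Finset.ssubset_iff_of_subset (Finset.filter_subset _ _)]
        refine ⟨s, Finset.mem_Icc.mpr ⟨hs1, le_refl s⟩, ?_⟩
        simp only [Finset.mem_filter]
        rintro ⟨-, hlt⟩
        omega
      have hIccs : ((Finset.Icc (1 : ℤ) s).card : ℤ) = s := by
        rw [Int.card_Icc]
        omega
      have hsplit := Finset.card_filter_add_card_filter_not
        (s := (Finset.Icc (x + 1) m).filter (fun i => i ∉ Δ)) (p := fun i => c l < d i)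
      have hZ : (((Finset.Icc (x + 1) m).filter (fun i => i ∉ Δ)).filter
            (fun i => c l < d i)).card ≤
          ((Finset.Icc (x + 1) m).filter (fun i => c l < d i)).card := by
        apply Finset.card_le_card
        intro y hy
        simp only [Finset.mem_filter] at hy ⊢
        exact ⟨hy.1.1, hy.2⟩
      have hw : (((Finset.Icc (x + 1) m).filter (fun i => i ∉ Δ)).filter
            (fun i => ¬ c l < d i)).card ≤
          ((Finset.Icc (1 : ℤ) m).filter (fun i => i ∉ Δ ∧ d i < c l)).card := by
        apply Finset.card_le_card
        intro y hy
        simp only [Finset.mem_filter, Finset.mem_Icc] at hy ⊢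
        obtain ⟨⟨⟨hy1, hy2⟩, hyΔ⟩, hyd⟩ := hy
        have hne := hcd l (hSsub hlS) y (Finset.mem_Icc.mpr ⟨by omega, hy2⟩)
        exact ⟨⟨by omega, hy2⟩, hyΔ, by omega⟩
      omega
    · -- case (b)
      rw [hqs, Finset.Icc_eq_empty (by omega : ¬ (s + 1 ≤ s)), Finset.sum_empty,
        add_zero] at hsum
      have hxT : x ∉ (Finset.Icc (x + 1) m).filter (fun i => i ∉ Δ) := by
        simp only [Finset.mem_filter, Finset.mem_Icc]
        rintro ⟨⟨h1, -⟩, -⟩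
        omega
      have hcardeq : (S.filter (fun i => c i < d x)).card =
          (insert x ((Finset.Icc (x + 1) m).filter (fun i => i ∉ Δ))).card := by
        rw [Finset.card_insert_of_notMem hxT]
        omega
      have hcond : ∀ y ∈ insert x ((Finset.Icc (x + 1) m).filter (fun i => i ∉ Δ)),
          (((insert x ((Finset.Icc (x + 1) m).filter (fun i => i ∉ Δ))).filter
              (fun z => y ≤ z)).card : ℕ) ≤
            ((S.filter (fun i => c i < d x)).filter (fun v => c v < d y)).card := by
        intro y hy
        rcases Finset.mem_insert.mp hy with hyx | hyT
        · rw [hyx]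
          have hfA : (S.filter (fun i => c i < d x)).filter (fun v => c v < d x) =
              S.filter (fun i => c i < d x) :=
            Finset.filter_true_of_mem (fun v hv => (Finset.mem_filter.mp hv).2)
          rw [hfA]
          have hfB : (insert x ((Finset.Icc (x + 1) m).filter (fun i => i ∉ Δ))).filter
              (fun z => x ≤ z) =
              insert x ((Finset.Icc (x + 1) m).filter (fun i => i ∉ Δ)) := by
            apply Finset.filter_true_of_mem
            intro z hz
            rcases Finset.mem_insert.mp hz with hzy | hz'
            · omega
            · have := (Finset.mem_Icc.mp (Finset.mem_filter.mp hz').1).1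
              omega
          rw [hfB, Finset.card_insert_of_notMem hxT]
          omega
        · obtain ⟨hyI, hyΔ⟩ := Finset.mem_filter.mp hyT
          obtain ⟨hy1, hy2⟩ := Finset.mem_Icc.mp hyI
          have hdyx : d y ≤ d x := hdmono ⟨hx1, hxm⟩ ⟨by omega, hy2⟩ (by omega)
          -- RHS
          have hRHS : (S.filter (fun i => c i < d x)).filter (fun v => c v < d y) =
              S.filter (fun i => c i < d y) := by
            rw [Finset.filter_filter]
            apply Finset.filter_congr
            intro i _
            constructor
            · exact fun hh => hh.2
            · exact fun hh => ⟨lt_of_lt_of_le hh hdyx, hh⟩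
          -- LHS
          have hLHS : (insert x ((Finset.Icc (x + 1) m).filter (fun i => i ∉ Δ))).filter
              (fun z => y ≤ z) =
              insert y ((Finset.Icc (y + 1) m).filter (fun i => i ∉ Δ)) := by
            rw [Finset.filter_insert, if_neg (by omega : ¬ y ≤ x)]
            refine Finset.ext fun z => ?_
            simp only [Finset.mem_filter, Finset.mem_Icc, Finset.mem_insert]
            constructor
            · rintro ⟨⟨⟨hz1, hz2⟩, hzΔ⟩, hyz⟩
              rcases eq_or_lt_of_le hyz with heq | hlt'
              · exact Or.inl heq.symm
              · exact Or.inr ⟨⟨by omega, hz2⟩, hzΔ⟩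
            · rintro (heq | ⟨⟨hz1, hz2⟩, hzΔ⟩)
              · rw [heq]
                exact ⟨⟨⟨by omega, hy2⟩, hyΔ⟩, le_refl y⟩
              · exact ⟨⟨⟨by omega, hz2⟩, hzΔ⟩, by omega⟩
          rw [hRHS, hLHS]
          have hyT' : y ∉ (Finset.Icc (y + 1) m).filter (fun i => i ∉ Δ) := by
            simp only [Finset.mem_filter, Finset.mem_Icc]
            rintro ⟨⟨h1, -⟩, -⟩
            omega
          rw [Finset.card_insert_of_notMem hyT']
          have := hq_of_notΔ y (by omega) hy2 hyΔ
          omega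
      have happ := pair_sum (insert x ((Finset.Icc (x + 1) m).filter (fun i => i ∉ Δ))).card
        (S.filter (fun i => c i < d x))
        (insert x ((Finset.Icc (x + 1) m).filter (fun i => i ∉ Δ))) c d rfl hcardeq ?_
      · rw [Finset.sum_insert hxT] at happ
        have hApos : (1 : ℤ) ≤ ((S.filter (fun i => c i < d x)).card : ℤ) := by omega
        linarith
      · intro y hy
        exact hcond y hy
  obtain ⟨hP, hQ⟩ := key (m - j).toNat j hj1 hjm rfl hCdj
  constructor
  · simp only [qd]
    omega
  · intro hjΔ
    have := hQ hjΔ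
    simp only [qd]
    omega
end
end

section
/- Suppose that d^{h} ≥ b_k, and let j ∈ {1,…,n} be such that c_j > d^{h}. Then q′_j ≤ k; in addition, if j ∉ S then q′_j < k. Here q′_j = k − #{i ∈ Δ : d_i < c_j} + #{i > j : i ∉ S} + 1. -/
open Finset
open scoped Classical

noncomputable section

open GenMaj

open Finset
open scoped Classical

private lemma sum_lemma (d c : ℤ → ℤ) :
    ∀ (N : ℕ) (B A : Finset ℤ) (M : ℤ), B.card = N →
      (∀ x ∈ A, ∀ y ∈ A, x ≤ y → d y ≤ d x) →
      (∀ x ∈ A, d x < M) →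
      (∀ i ∈ B, ((B.filter (fun i' => i < i')).card : ℤ) + 1 ≤
          ((A.filter (fun x => d x < c i)).card : ℤ)) →
      ((B.card : ℤ) + 1 ≤ (A.card : ℤ)) →
      (∑ x ∈ A, d x) < (∑ i ∈ B, c i) + ((A.card : ℤ) - (B.card : ℤ)) * M := by
  intro N
  induction N with
  | zero =>
    intro B A M hBcard hDA hM hB hcard
    have hBe : B = ∅ := Finset.card_eq_zero.mp hBcard
    subst hBe
    have hAne : A.Nonempty := Finset.card_pos.mp (by omega)
    have := Finset.sum_lt_sum_of_nonempty hAne hM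
    simp only [Finset.sum_const, smul_eq_mul] at this
    rw [nsmul_eq_mul] at this
    simpa using this
  | succ N ih =>
    intro B A M hBcard hDA hM hB hcard
    have hBne : B.Nonempty := Finset.card_pos.mp (by omega)
    set i0 := B.min' hBne with hi0def
    have hi0B : i0 ∈ B := B.min'_mem hBne
    have hfB : B.filter (fun i' => i0 < i') = B.erase i0 := by
      ext x
      simp only [mem_filter, mem_erase]
      constructor
      · rintro ⟨hx, hlt⟩; exact ⟨by omega, hx⟩
      · rintro ⟨hne, hx⟩
        exact ⟨hx, lt_of_le_of_ne (B.min'_le x hx) (Ne.symm hne)⟩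
    have hA0card := hB i0 hi0B
    rw [hfB, Finset.card_erase_of_mem hi0B] at hA0card
    set A0 := A.filter (fun x => d x < c i0) with hA0def
    have hA0ne : A0.Nonempty := Finset.card_pos.mp (by omega)
    set a0 := A0.min' hA0ne with ha0def
    have ha0A0 : a0 ∈ A0 := A0.min'_mem hA0ne
    have ha0A : a0 ∈ A := (Finset.mem_filter.mp ha0A0).1
    have ha0lt : d a0 < c i0 := (Finset.mem_filter.mp ha0A0).2
    have key := ih (B.erase i0) (A.erase a0) M
      (by rw [Finset.card_erase_of_mem hi0B]; omega)
      (fun x hx y hy hxy => hDA x (Finset.mem_of_mem_erase hx) y (Finset.mem_of_mem_erase hy) hxy)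
      (fun x hx => hM x (Finset.mem_of_mem_erase hx))
      ?_ ?_
    · rw [Finset.card_erase_of_mem hi0B, Finset.card_erase_of_mem ha0A] at key
      have hsA : ∑ x ∈ A, d x = d a0 + ∑ x ∈ A.erase a0, d x :=
        (Finset.add_sum_erase A d ha0A).symm
      have hsB : ∑ i ∈ B, c i = c i0 + ∑ i ∈ B.erase i0, c i :=
        (Finset.add_sum_erase B c hi0B).symm
      have e1 : ((A.card - 1 : ℕ) : ℤ) - ((B.card - 1 : ℕ) : ℤ) = (A.card : ℤ) - B.card := by
        have h1 := Finset.card_pos.mpr ⟨a0, ha0A⟩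
        have h2 := Finset.card_pos.mpr ⟨i0, hi0B⟩
        omega
      rw [e1] at key
      linarith
    · -- hB for erased sets
      intro i' hi'
      have hi'B : i' ∈ B := Finset.mem_of_mem_erase hi'
      have hne : i' ≠ i0 := Finset.ne_of_mem_erase hi'
      have hi0lt : i0 < i' := lt_of_le_of_ne (B.min'_le i' hi'B) (Ne.symm hne)
      have hN1 : 1 ≤ N := by
        have hp := Finset.card_pos.mpr ⟨i', hi'⟩
        rw [Finset.card_erase_of_mem hi0B] at hp
        omega
      have hfB' : (B.erase i0).filter (fun x => i' < x) = B.filter (fun x => i' < x) := by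
        ext x
        simp only [mem_filter, mem_erase]
        constructor
        · rintro ⟨⟨_, hx⟩, hlt⟩; exact ⟨hx, hlt⟩
        · rintro ⟨hx, hlt⟩; exact ⟨⟨by omega, hx⟩, hlt⟩
      rw [hfB']
      have hfe : (A.erase a0).filter (fun x => d x < c i') =
          (A.filter (fun x => d x < c i')).erase a0 := by
        rw [Finset.filter_erase]
      rw [hfe]
      by_cases hmem : a0 ∈ A.filter (fun x => d x < c i')
      · -- then A0 ⊆ A.filter (d < c i')
        have hsub : A0 ⊆ A.filter (fun x => d x < c i') := by
          intro x hx
          have hxA : x ∈ A := (Finset.mem_filter.mp hx).1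
          have ha0x : a0 ≤ x := A0.min'_le x hx
          have : d x ≤ d a0 := hDA a0 ha0A x hxA ha0x
          exact Finset.mem_filter.mpr ⟨hxA, lt_of_le_of_lt this (Finset.mem_filter.mp hmem).2⟩
        have h1 : (N:ℤ) + 1 ≤ ((A.filter (fun x => d x < c i')).card : ℤ) := by
          have := Finset.card_le_card hsub; omega
        have h2 : ((B.filter (fun x => i' < x)).card : ℤ) ≤ (N:ℤ) - 1 := by
          have hsub2 : B.filter (fun x => i' < x) ⊆ (B.erase i0).erase i' := by
            intro x hx
            obtain ⟨hxB, hlt⟩ := Finset.mem_filter.mp hx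
            exact Finset.mem_erase.mpr ⟨by omega, Finset.mem_erase.mpr ⟨by omega, hxB⟩⟩
          have := Finset.card_le_card hsub2
          rw [Finset.card_erase_of_mem (Finset.mem_erase.mpr ⟨hne, hi'B⟩),
            Finset.card_erase_of_mem hi0B] at this
          omega
        have h3 : (((A.filter (fun x => d x < c i')).erase a0).card : ℤ) + 1 =
            ((A.filter (fun x => d x < c i')).card : ℤ) := by
          exact_mod_cast Finset.card_erase_add_one hmem
        linarith
      · rw [Finset.erase_eq_of_notMem hmem]
        exact hB i' hi'B
    · rw [Finset.card_erase_of_mem hi0B, Finset.card_erase_of_mem ha0A]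
      have h1 := Finset.card_pos.mpr ⟨a0, ha0A⟩
      omega

/-- Lemma: if `d^h ≥ b_k` and `c_j > d^h`, then `q'_j ≤ k`; moreover if `j ∉ S` then `q'_j < k`. -/
theorem statement12
    (m n s k : ℤ) (hm : 0 ≤ m) (hn : 0 ≤ n) (hs : 0 ≤ s) (hk : 0 ≤ k)
    (hmnsk : m + s = n + k)
    (a b c d : ℤ → ℤ)
    (ha : AntitoneOn a (Set.Icc 1 s)) (hb : AntitoneOn b (Set.Icc 1 k))
    (hcmono : AntitoneOn c (Set.Icc 1 n)) (hdmono : AntitoneOn d (Set.Icc 1 m))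
    (hcd : ∀ i ∈ Finset.Icc (1 : ℤ) n, ∀ j ∈ Finset.Icc (1 : ℤ) m, c i ≠ d j)
    (S Δ : Finset ℤ) (hSsub : S ⊆ Finset.Icc 1 n) (hΔsub : Δ ⊆ Finset.Icc 1 m)
    (hSdef : ∀ j ∈ Finset.Icc (1 : ℤ) n, (j ∈ S ↔ DeltaCond n k b d c Δ S j))
    (hΔdef : ∀ j ∈ Finset.Icc (1 : ℤ) m, (j ∈ Δ ↔ DeltaCond m s a c d S Δ j))
    (h h' : ℤ) (hcardΔ : h = (Δ.card : ℤ)) (hcardS : h' = (S.card : ℤ))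
    (D C : ℤ → ℤ)
    (hDmono : AntitoneOn D (Set.Icc 1 h))
    (hDval : Δ.val.map d = (Finset.Icc (1 : ℤ) h).val.map D)
    (hCmono : AntitoneOn C (Set.Icc 1 h'))
    (hCval : S.val.map c = (Finset.Icc (1 : ℤ) h').val.map C)
    (hdb : ext k b k ≤ ext h D h)
    (j : ℤ) (hj : j ∈ Finset.Icc (1 : ℤ) n)
    (hcj : ext h D h < ((c j : ℝ) : EReal)) :
    qd n k d c Δ S j ≤ k ∧ (j ∉ S → qd n k d c Δ S j < k) := by
  have hjn := Finset.mem_Icc.mp hj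
  -- basic consequences of the EReal hypotheses
  have hh1 : 1 ≤ h := by
    by_contra hcon
    push_neg at hcon
    rw [GenMaj.ext, if_pos (by omega)] at hcj
    exact not_top_lt hcj
  have hDext : ext h D h = ((D h : ℝ) : EReal) := by
    rw [GenMaj.ext, if_neg (by omega), if_pos le_rfl]
  have hDh_cj : D h < c j := by
    rw [hDext] at hcj
    exact_mod_cast hcj
  have hk1 : 1 ≤ k := by
    by_contra hcon
    push_neg at hcon
    rw [GenMaj.ext, if_pos (by omega), hDext] at hdb
    exact EReal.coe_ne_top _ (top_le_iff.mp hdb)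
  have hbk : b k ≤ D h := by
    rw [GenMaj.ext, if_neg (by omega), if_pos le_rfl, hDext] at hdb
    exact_mod_cast hdb
  -- D h is the minimal entry of d over Δ
  have hminD : ∀ i ∈ Δ, D h ≤ d i := by
    intro i hi
    have h1 : d i ∈ Δ.val.map d := Multiset.mem_map_of_mem d (Finset.mem_val.mpr hi)
    rw [hDval] at h1
    obtain ⟨t, ht, hdt⟩ := Multiset.mem_map.mp h1
    obtain ⟨ht1, hth⟩ := Finset.mem_Icc.mp (Finset.mem_val.mp ht)
    rw [← hdt]
    exact hDmono (Set.mem_Icc.mpr ⟨ht1, hth⟩) (Set.mem_Icc.mpr ⟨hh1, le_rfl⟩) hth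
  have hexD : ∃ i ∈ Δ, d i = D h := by
    have h1 : D h ∈ (Finset.Icc (1 : ℤ) h).val.map D :=
      Multiset.mem_map_of_mem D (Finset.mem_val.mpr (Finset.mem_Icc.mpr ⟨hh1, le_rfl⟩))
    rw [← hDval] at h1
    obtain ⟨i, hi, hdi⟩ := Multiset.mem_map.mp h1
    exact ⟨i, Finset.mem_val.mp hi, hdi⟩
  -- unfolding qd
  have hq : ∀ i : ℤ, qd n k d c Δ S i =
      k - ((Δ.filter (fun l => d l < c i)).card : ℤ) +
        (((Finset.Icc (i + 1) n).filter (fun l => l ∉ S)).card : ℤ) + 1 := fun i => rfl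
  -- consequences of i ∉ S
  have hnotS : ∀ i ∈ Finset.Icc (1 : ℤ) n, i ∉ S →
      qd n k d c Δ S i ≤ k ∧
      ((∃ l ∈ Δ, d l < c i ∧ (∀ l' ∈ Δ, d l' < c i → l ≤ l') ∧
          1 ≤ Na n k b d c Δ S l ∧
          (((Finset.Icc (i + 1) n).filter (fun x => d l < c x)).card : ℤ) +
              (((Finset.Icc (1 : ℤ) k).filter (fun x => d l < b x ∧ b x < c i)).card : ℤ) + 1 ≤
            Na n k b d c Δ S l) ∨
        ((∑ x ∈ (Finset.Icc (i + 1) n).filter (fun x => x ∉ S), c x) + c i +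
            (∑ x ∈ Finset.Icc (qd n k d c Δ S i + 1) k, b x) ≤
          ∑ x ∈ Δ.filter (fun x => d x < c i), d x)) := by
    intro i hi hiS
    have h2 : ¬ DeltaCond n k b d c Δ S i := fun hD => hiS ((hSdef i hi).mpr hD)
    simp only [DeltaCond, not_not] at h2
    exact h2
  have lemA : ∀ i ∈ Finset.Icc (1 : ℤ) n, i ∉ S →
      (((Finset.Icc (i + 1) n).filter (fun l => l ∉ S)).card : ℤ) + 1 ≤
        ((Δ.filter (fun l => d l < c i)).card : ℤ) := by
    intro i hi hiS
    have h1 := (hnotS i hi hiS).1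
    rw [hq i] at h1
    omega
  have lemB : ∀ i ∈ Finset.Icc (1 : ℤ) n, i ∉ S →
      (((Finset.Icc (i + 1) n).filter (fun l => l ∉ S)).card : ℤ) + 2 ≤
        ((Δ.filter (fun l => d l < c i)).card : ℤ) := by
    intro i hi hiS
    obtain ⟨hi1, hin⟩ := Finset.mem_Icc.mp hi
    by_contra hcon
    push_neg at hcon
    have hEq : ((Δ.filter (fun l => d l < c i)).card : ℤ) =
        (((Finset.Icc (i + 1) n).filter (fun l => l ∉ S)).card : ℤ) + 1 := by
      have := lemA i hi hiS; omega
    obtain ⟨hqle, hdisj⟩ := hnotS i hi hiS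
    rcases hdisj with ⟨l, hlΔ, hdlci, hlmin, -, hcnt⟩ | hsum
    · -- case (a)
      have hlm := Finset.mem_Icc.mp (hΔsub hlΔ)
      have hAeq : Δ.filter (fun x => d x < c i) = insert l (Δ.filter (fun x => l < x)) := by
        ext x
        simp only [Finset.mem_filter, Finset.mem_insert]
        constructor
        · rintro ⟨hxΔ, hdx⟩
          rcases eq_or_lt_of_le (hlmin x hxΔ hdx) with hh2 | hh2
          · exact Or.inl hh2.symm
          · exact Or.inr ⟨hxΔ, hh2⟩
        · rintro (rfl | ⟨hxΔ, hlx⟩)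
          · exact ⟨hlΔ, hdlci⟩
          · have hxm := Finset.mem_Icc.mp (hΔsub hxΔ)
            have hdd : d x ≤ d l := hdmono (Set.mem_Icc.mpr ⟨hlm.1, hlm.2⟩)
              (Set.mem_Icc.mpr ⟨hxm.1, hxm.2⟩) (le_of_lt hlx)
            exact ⟨hxΔ, lt_of_le_of_lt hdd hdlci⟩
      have hcard1 : (Δ.filter (fun x => d x < c i)).card =
          (Δ.filter (fun x => l < x)).card + 1 := by
        rw [hAeq, Finset.card_insert_of_notMem (by simp)]
      have hMb : (((Finset.Icc (1 : ℤ) k).filter (fun x => d l < b x)).card : ℤ) ≤ k - 1 := by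
        have hsub : (Finset.Icc (1 : ℤ) k).filter (fun x => d l < b x) ⊆
            (Finset.Icc (1 : ℤ) k).erase k := by
          intro x hx
          obtain ⟨hxI, hlt⟩ := Finset.mem_filter.mp hx
          have hbd : b k ≤ d l := le_trans hbk (hminD l hlΔ)
          refine Finset.mem_erase.mpr ⟨?_, hxI⟩
          rintro rfl
          omega
        have h1 := Finset.card_le_card hsub
        rw [Finset.card_erase_of_mem (Finset.mem_Icc.mpr ⟨hk1, le_rfl⟩)] at h1
        have h2 : ((Finset.Icc (1 : ℤ) k).card : ℤ) = k := by
          rw [Int.card_Icc]; omega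
        omega
      have hpart : (((Finset.Icc (i + 1) n).filter (fun x => x ∉ S)).filter
            (fun x => d l < c x)).card +
          (((Finset.Icc (i + 1) n).filter (fun x => x ∉ S)).filter
            (fun x => c x < d l)).card =
          ((Finset.Icc (i + 1) n).filter (fun x => x ∉ S)).card := by
        rw [show ((Finset.Icc (i + 1) n).filter (fun x => x ∉ S)).filter
              (fun x => c x < d l) =
            ((Finset.Icc (i + 1) n).filter (fun x => x ∉ S)).filter
              (fun x => ¬ d l < c x) from ?_]
        · exact Finset.card_filter_add_card_filter_not _
        · apply Finset.filter_congr
          intro x hx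
          obtain ⟨hx1, -⟩ := Finset.mem_filter.mp hx
          obtain ⟨hxi, hxn⟩ := Finset.mem_Icc.mp hx1
          have hne := hcd x (Finset.mem_Icc.mpr ⟨by omega, hxn⟩) l
            (Finset.mem_Icc.mpr ⟨hlm.1, hlm.2⟩)
          constructor
          · intro hlt; omega
          · intro hlt; omega
      have ht1 : (((Finset.Icc (i + 1) n).filter (fun x => x ∉ S)).filter
            (fun x => d l < c x)).card ≤
          ((Finset.Icc (i + 1) n).filter (fun x => d l < c x)).card := by
        apply Finset.card_le_card
        intro x hx
        simp only [Finset.mem_filter] at hx ⊢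
        exact ⟨hx.1.1, hx.2⟩
      have hW : (((Finset.Icc (i + 1) n).filter (fun x => x ∉ S)).filter
            (fun x => c x < d l)).card ≤
          ((Finset.Icc (1 : ℤ) n).filter (fun x => x ∉ S ∧ c x < d l)).card := by
        apply Finset.card_le_card
        intro x hx
        simp only [Finset.mem_filter, Finset.mem_Icc] at hx ⊢
        exact ⟨⟨by omega, hx.1.1.2⟩, hx.1.2, hx.2⟩
      simp only [Na] at hcnt
      omega
    · -- case (b)
      have hqk : qd n k d c Δ S i = k := by rw [hq i]; omega
      rw [hqk, show Finset.Icc (k + 1) k = (∅ : Finset ℤ) from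
        Finset.Icc_eq_empty (by omega), Finset.sum_empty, add_zero] at hsum
      have hDA' : ∀ x ∈ Δ.filter (fun x => d x < c i), ∀ y ∈ Δ.filter (fun x => d x < c i),
          x ≤ y → d y ≤ d x := by
        intro x hx y hy hxy
        have hxm := Finset.mem_Icc.mp (hΔsub (Finset.mem_filter.mp hx).1)
        have hym := Finset.mem_Icc.mp (hΔsub (Finset.mem_filter.mp hy).1)
        exact hdmono (Set.mem_Icc.mpr ⟨hxm.1, hxm.2⟩) (Set.mem_Icc.mpr ⟨hym.1, hym.2⟩) hxy
      have hM' : ∀ x ∈ Δ.filter (fun x => d x < c i), d x < c i :=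
        fun x hx => (Finset.mem_filter.mp hx).2
      have hB' : ∀ i' ∈ (Finset.Icc (i + 1) n).filter (fun x => x ∉ S),
          ((((Finset.Icc (i + 1) n).filter (fun x => x ∉ S)).filter
              (fun x => i' < x)).card : ℤ) + 1 ≤
            (((Δ.filter (fun x => d x < c i)).filter (fun x => d x < c i')).card : ℤ) := by
        intro i' hi'
        obtain ⟨hi'I, hi'S⟩ := Finset.mem_filter.mp hi'
        obtain ⟨hi'1, hi'n⟩ := Finset.mem_Icc.mp hi'I
        have hi'Icc : i' ∈ Finset.Icc (1 : ℤ) n := Finset.mem_Icc.mpr ⟨by omega, hi'n⟩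
        have hA' := lemA i' hi'Icc hi'S
        have hcc : c i' ≤ c i := hcmono (Set.mem_Icc.mpr ⟨hi1, hin⟩)
          (Set.mem_Icc.mpr ⟨by omega, hi'n⟩) (by omega)
        have hfilter1 : (Δ.filter (fun x => d x < c i)).filter (fun x => d x < c i') =
            Δ.filter (fun x => d x < c i') := by
          ext x
          simp only [Finset.mem_filter]
          constructor
          · rintro ⟨⟨hxΔ, -⟩, hx2⟩; exact ⟨hxΔ, hx2⟩
          · rintro ⟨hxΔ, hx2⟩; exact ⟨⟨hxΔ, by omega⟩, hx2⟩
        have hfilter2 : ((Finset.Icc (i + 1) n).filter (fun x => x ∉ S)).filter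
              (fun x => i' < x) =
            (Finset.Icc (i' + 1) n).filter (fun x => x ∉ S) := by
          ext x
          simp only [Finset.mem_filter, Finset.mem_Icc]
          constructor
          · rintro ⟨⟨⟨hx1, hx2⟩, hxS⟩, hlt⟩; exact ⟨⟨by omega, hx2⟩, hxS⟩
          · rintro ⟨⟨hx1, hx2⟩, hxS⟩; exact ⟨⟨⟨by omega, hx2⟩, hxS⟩, by omega⟩
        rw [hfilter1, hfilter2]
        exact hA'
      have hcard' : ((((Finset.Icc (i + 1) n).filter (fun x => x ∉ S)).card : ℕ) : ℤ) + 1 ≤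
          ((Δ.filter (fun x => d x < c i)).card : ℤ) := by omega
      have key := sum_lemma d c ((Finset.Icc (i + 1) n).filter (fun x => x ∉ S)).card
        ((Finset.Icc (i + 1) n).filter (fun x => x ∉ S))
        (Δ.filter (fun x => d x < c i)) (c i) rfl hDA' hM' hB' hcard'
      have hc2 : ((Δ.filter (fun x => d x < c i)).card : ℤ) -
          (((Finset.Icc (i + 1) n).filter (fun x => x ∉ S)).card : ℤ) = 1 := by omega
      rw [hc2, one_mul] at key
      linarith
  -- assemble
  constructor
  · by_cases hjS : j ∈ S
    · rw [hq j]
      by_cases hBe : (Finset.Icc (j + 1) n).filter (fun l => l ∉ S) = ∅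
      · obtain ⟨i0, hi0, hdi0⟩ := hexD
        have hmem : i0 ∈ Δ.filter (fun l => d l < c j) :=
          Finset.mem_filter.mpr ⟨hi0, by rw [hdi0]; exact hDh_cj⟩
        have hpos := Finset.card_pos.mpr ⟨i0, hmem⟩
        rw [hBe]
        simp only [Finset.card_empty, Nat.cast_zero]
        omega
      · have hBne : ((Finset.Icc (j + 1) n).filter (fun l => l ∉ S)).Nonempty :=
          Finset.nonempty_iff_ne_empty.mpr hBe
        set B0 := (Finset.Icc (j + 1) n).filter (fun l => l ∉ S) with hB0
        set i1 := B0.min' hBne with hi1def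
        have hi1B : i1 ∈ B0 := B0.min'_mem hBne
        obtain ⟨hi1I, hi1S⟩ := Finset.mem_filter.mp hi1B
        obtain ⟨hi11, hi1n⟩ := Finset.mem_Icc.mp hi1I
        have hi1Icc : i1 ∈ Finset.Icc (1 : ℤ) n := Finset.mem_Icc.mpr ⟨by omega, hi1n⟩
        have hstrict := lemB i1 hi1Icc hi1S
        have hYrel : (Finset.Icc (i1 + 1) n).filter (fun l => l ∉ S) = B0.erase i1 := by
          ext x
          constructor
          · intro hx
            obtain ⟨hxI, hxS⟩ := Finset.mem_filter.mp hx
            obtain ⟨hx1, hx2⟩ := Finset.mem_Icc.mp hxI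
            refine Finset.mem_erase.mpr ⟨by omega, ?_⟩
            rw [hB0]
            exact Finset.mem_filter.mpr ⟨Finset.mem_Icc.mpr ⟨by omega, hx2⟩, hxS⟩
          · intro hx
            obtain ⟨hne, hxB⟩ := Finset.mem_erase.mp hx
            have hge := B0.min'_le x hxB
            rw [hB0] at hxB
            obtain ⟨hxI, hxS⟩ := Finset.mem_filter.mp hxB
            obtain ⟨hx1, hx2⟩ := Finset.mem_Icc.mp hxI
            exact Finset.mem_filter.mpr ⟨Finset.mem_Icc.mpr ⟨by omega, hx2⟩, hxS⟩
        rw [hYrel, Finset.card_erase_of_mem hi1B] at hstrict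
        have hmono : (Δ.filter (fun l => d l < c i1)).card ≤
            (Δ.filter (fun l => d l < c j)).card := by
          apply Finset.card_le_card
          intro x hx
          obtain ⟨hxΔ, hxd⟩ := Finset.mem_filter.mp hx
          have hcc : c i1 ≤ c j := hcmono (Set.mem_Icc.mpr ⟨hjn.1, hjn.2⟩)
            (Set.mem_Icc.mpr ⟨by omega, hi1n⟩) (by omega)
          exact Finset.mem_filter.mpr ⟨hxΔ, by omega⟩
        have hB0pos := Finset.card_pos.mpr hBne
        omega
    · have hstrict := lemB j hj hjS
      rw [hq j]
      omega
  · intro hjS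
    have hstrict := lemB j hj hjS
    rw [hq j]
    omega
end
end
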